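/- arXiv:1907.05018 — 2 statements merged into one kernel-verified Lean document; each statement's English description precedes it below -/
import Mathlib

section
/- Let G be a finite connected simple graph that is (P7, C7, C4, diamond)-free and contains an induced cycle on 6 vertices. Then G has a clique cutset, or G has a vertex of degree at most 2, or G is isomorphic to the Petersen graph. -/
open SimpleGraph

/-- `G` contains no induced subgraph isomorphic to `H`. -/
def IndFree {V : Type*} {W : Type*} (G : SimpleGraph V) (H : SimpleGraph W) : Prop :=
  IsEmpty (H ↪g G)

/-- The diamond: `K4` minus one edge. -/
def diamondGraph : SimpleGraph (Fin 4) :=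
  fromEdgeSet {s(0,1), s(0,2), s(0,3), s(1,2), s(1,3)}

/-- `G` has a clique cutset: a clique `K` whose removal separates two vertices
outside `K` which are connected in `G`. -/
def HasCliqueCutset {V : Type*} (G : SimpleGraph V) : Prop :=
  ∃ K : Set V, G.IsClique K ∧ ∃ a b : (Kᶜ : Set V),
    G.Reachable a.1 b.1 ∧ ¬ (G.induce Kᶜ).Reachable a b

/-- The Petersen graph: vertices are the 2-element subsets of a 5-element set,
adjacent exactly when disjoint. -/
def petersenGraph : SimpleGraph {s : Finset (Fin 5) // s.card = 2} where
  Adj a b := Disjoint a.1 b.1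
  symm := ⟨fun a b (h : Disjoint a.1 b.1) => h.symm⟩
  loopless := ⟨fun a (h : Disjoint a.1 a.1) => by
    simp only [disjoint_self, Finset.bot_eq_empty] at h
    have h2 := a.2
    rw [h] at h2
    simp at h2⟩

/-!
Suppose `G` has no clique cutset and minimum degree at least three, and let `e 0, …, e 5` be an
induced hexagon. As `G` is C4- and diamond-free, two non-adjacent vertices have at most one common
neighbour and the common neighbours of an edge form a clique. Hence no vertex off the hexagon sees
two hexagon vertices at distance two, and a vertex `u` with a neighbour `a` and a non-neighbour has
a neighbour missing `a` (otherwise the neighbourhood of `u` is a clique cutset). Together with the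
absence of induced P7 and C7 this shows that no vertex sees exactly one hexagon vertex or exactly
two consecutive ones, so the third neighbour of `e k` is a spoke seeing exactly `e k` and
`e (k + 3)`. The three spokes are pairwise non-adjacent, a third neighbour `h` of a spoke sees all
three spokes and no hexagon vertex, and any further vertex would be cut off from the hexagon by a
clique. So `G` consists of the hexagon, the three spokes and `h`: it is the Petersen graph.
-/

namespace SimpleGraph

variable {V W : Type*} {G : SimpleGraph V} {H : SimpleGraph W}

theorem injective_of_adj_iff (hH : ∀ i j, (∀ k, H.Adj i k ↔ H.Adj j k) → i = j) {f : W → V}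
    (hf : ∀ i j, G.Adj (f i) (f j) ↔ H.Adj i j) : Function.Injective f :=
  fun i j hij => hH i j fun k => by rw [← hf, ← hf, hij]

theorem adj_iff_of_forall_lt [LinearOrder W] {f : W → V}
    (hf : ∀ i j, i < j → (G.Adj (f i) (f j) ↔ H.Adj i j)) (i j : W) :
    G.Adj (f i) (f j) ↔ H.Adj i j := by
  rcases lt_trichotomy i j with h | rfl | h
  · exact hf i j h
  · simp
  · rw [G.adj_comm, H.adj_comm]
    exact hf j i h

theorem Walk.mem_of_forall_adj_mem {S : Set V} (hS : ∀ x ∈ S, ∀ y, G.Adj x y → y ∈ S)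
    {a b : V} (p : G.Walk a b) (ha : a ∈ S) : b ∈ S := by
  induction p with
  | nil => exact ha
  | cons h _ ih => exact ih (hS _ ha _ h)

theorem Connected.surjective_of_forall_adj_mem_range (hG : G.Connected) [Nonempty W]
    {f : W → V} (hf : ∀ i y, G.Adj (f i) y → y ∈ Set.range f) : Function.Surjective f := by
  intro y
  obtain ⟨p⟩ := hG.preconnected (f (Classical.arbitrary W)) y
  exact p.mem_of_forall_adj_mem (S := Set.range f) (by rintro _ ⟨i, rfl⟩ y h; exact hf i y h)
    ⟨_, rfl⟩

namespace Embedding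

variable {n : ℕ}

def cycleRotate (e : cycleGraph (n + 2) ↪g G) (k : Fin (n + 2)) : cycleGraph (n + 2) ↪g G where
  toFun i := e (i + k)
  inj' := e.injective.comp (add_left_injective k)
  map_rel_iff' := by simp [cycleGraph_adj]

def cycleReflect (e : cycleGraph (n + 2) ↪g G) (k : Fin (n + 2)) : cycleGraph (n + 2) ↪g G where
  toFun i := e (k - i)
  inj' := e.injective.comp sub_right_injective
  map_rel_iff' := by simp [cycleGraph_adj, or_comm]

@[simp]
theorem cycleRotate_apply (e : cycleGraph (n + 2) ↪g G) (k i : Fin (n + 2)) :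
    e.cycleRotate k i = e (i + k) := rfl

theorem ne_of_forall_adj_iff (e : H ↪g G) {P : W → Prop} {u : V}
    (hu : ∀ k, G.Adj u (e k) ↔ P k) (hP : ∀ j, ∃ k, ¬ (H.Adj j k ↔ P k)) (j : W) : u ≠ e j := by
  rintro rfl
  obtain ⟨k, hk⟩ := hP j
  exact hk (e.map_adj_iff.symm.trans (hu k))

end Embedding

theorem Connected.nonempty_iso_of_adj_iff [Nonempty W] (hG : G.Connected)
    (hH : ∀ i j, (∀ k, H.Adj i k ↔ H.Adj j k) → i = j) {f : W → V}
    (hf : ∀ i j, G.Adj (f i) (f j) ↔ H.Adj i j)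
    (hclosed : ∀ i y, G.Adj (f i) y → y ∈ Set.range f) : Nonempty (H ≃g G) :=
  ⟨⟨Equiv.ofBijective f ⟨injective_of_adj_iff hH hf, hG.surjective_of_forall_adj_mem_range hclosed⟩,
    hf _ _⟩⟩

end SimpleGraph

instance : DecidableRel petersenGraph.Adj :=
  fun a b => inferInstanceAs (Decidable (Disjoint a.1 b.1))

def petersenModelAdj : Fin 6 ⊕ Fin 3 ⊕ Unit → Fin 6 ⊕ Fin 3 ⊕ Unit → Bool
  | .inl i, .inl j => decide ((cycleGraph 6).Adj i j)
  | .inl k, .inr (.inl j) | .inr (.inl j), .inl k => decide ((k : ℕ) % 3 = j)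
  | .inr (.inl _), .inr (.inr _) | .inr (.inr _), .inr (.inl _) => true
  | _, _ => false

/-- The Petersen graph as a hexagon `inl k`, three spokes `inr (inl j)` each joined to the
opposite hexagon vertices `j` and `j + 3`, and a hub `inr (inr ())` joined to the spokes. -/
def petersenModel : SimpleGraph (Fin 6 ⊕ Fin 3 ⊕ Unit) where
  Adj x y := petersenModelAdj x y
  symm := ⟨by decide⟩
  loopless := ⟨by decide⟩

instance : DecidableRel petersenModel.Adj :=
  fun x y => inferInstanceAs (Decidable (petersenModelAdj x y = true))

theorem nonempty_petersenModel_iso : Nonempty (petersenModel ≃g petersenGraph) := by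
  let f : Fin 6 ⊕ Fin 3 ⊕ Unit → {s : Finset (Fin 5) // s.card = 2} :=
    Sum.elim ![⟨{0, 4}, rfl⟩, ⟨{1, 3}, rfl⟩, ⟨{0, 2}, rfl⟩, ⟨{1, 4}, rfl⟩, ⟨{0, 3}, rfl⟩,
      ⟨{1, 2}, rfl⟩] <|
      Sum.elim ![⟨{2, 3}, rfl⟩, ⟨{2, 4}, rfl⟩, ⟨{3, 4}, rfl⟩] fun _ => ⟨{0, 1}, rfl⟩
  exact ⟨⟨Equiv.ofBijective f (by decide), by decide⟩⟩

section

variable {V : Type*} {G : SimpleGraph V}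

theorem hasCliqueCutset_of_forall_adj_mem (hconn : G.Connected) {K S : Set V}
    (hK : G.IsClique K) (hSK : Disjoint S K) (hS : ∀ x ∈ S, ∀ y, G.Adj x y → y ∈ S ∨ y ∈ K)
    {a b : V} (ha : a ∈ S) (hb : b ∉ S) (hbK : b ∉ K) : HasCliqueCutset G := by
  refine ⟨K, hK, ⟨a, Set.disjoint_left.1 hSK ha⟩, ⟨b, hbK⟩, hconn.preconnected a b, ?_⟩
  rintro ⟨p⟩
  exact hb (p.mem_of_forall_adj_mem (S := {x : (Kᶜ : Set V) | x.1 ∈ S})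
    (fun x hx y hxy => (hS x hx y hxy).resolve_right y.2) ha)

namespace IndFree

variable {W : Type*} {H : SimpleGraph W}

theorem false_of_injective (h : IndFree G H) (f : W → V) (hinj : Function.Injective f)
    (hf : ∀ i j, G.Adj (f i) (f j) ↔ H.Adj i j) : False :=
  h.false ⟨⟨f, hinj⟩, hf _ _⟩

theorem false_of_adj_iff [LinearOrder W] (h : IndFree G H)
    (hH : ∀ i j, (∀ k, H.Adj i k ↔ H.Adj j k) → i = j) (f : W → V)
    (hf : ∀ i j, i < j → (G.Adj (f i) (f j) ↔ H.Adj i j)) : False :=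
  h.false_of_injective f (injective_of_adj_iff hH (adj_iff_of_forall_lt hf))
    (adj_iff_of_forall_lt hf)

end IndFree

structure IsC4DiamondFree (G : SimpleGraph V) : Prop where
  c4Free : IndFree G (cycleGraph 4)
  diamondFree : IndFree G diamondGraph

namespace IsC4DiamondFree

variable (hF : IsC4DiamondFree G) {x y p q : V}
include hF

-- Here and in `false_of_path7`, `false_of_cycle7` the default arguments check the adjacency
-- pattern against the hypotheses at the call site, which then only lists the vertices.
theorem false_of_square (f : Fin 4 → V)
    (hf : Function.Injective f := by
      intro i j h; fin_cases i <;> fin_cases j <;>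
        first | rfl | (simp at h <;> subst_vars <;> simp_all +decide))
    (hadj : G.Adj (f 0) (f 1) ∧ G.Adj (f 1) (f 2) ∧ G.Adj (f 2) (f 3) ∧ G.Adj (f 3) (f 0) ∧
      ¬ G.Adj (f 0) (f 2) := by
        refine ⟨?_, ?_, ?_, ?_, ?_⟩ <;> simp_all +decide [adj_comm] <;>
          first | exact Adj.symm ‹_› | exact fun h => ‹¬ G.Adj _ _› h.symm) : False := by
  obtain ⟨h01, h12, h23, h30, h02⟩ := hadj
  by_cases h13 : G.Adj (f 1) (f 3)
  · refine hF.diamondFree.false_of_injective ![f 1, f 3, f 0, f 2] ?_ ?_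
    · intro i j h
      fin_cases i <;> fin_cases j <;> simp_all [hf.eq_iff]
    · intro i j
      fin_cases i <;> fin_cases j <;> simp_all +decide [diamondGraph, adj_comm]
  · exact hF.c4Free.false_of_injective f hf fun i j => by
      fin_cases i <;> fin_cases j <;> simp_all +decide [adj_comm] <;> exact Adj.symm ‹_›

theorem unique_common_neighbor (hxy : ¬ G.Adj x y) (hne : x ≠ y) (hpx : G.Adj p x)
    (hpy : G.Adj p y) (hqx : G.Adj q x) (hqy : G.Adj q y) : p = q := by
  by_contra hpq
  exact hF.false_of_square ![x, p, y, q]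

theorem adj_of_common_neighbors (hxy : G.Adj x y) (hne : p ≠ q) (hpx : G.Adj p x)
    (hpy : G.Adj p y) (hqx : G.Adj q x) (hqy : G.Adj q y) : G.Adj p q := by
  by_contra hpq
  exact hF.false_of_square ![p, x, q, y]

theorem isClique_neighborSet {u a : V} (hua : G.Adj u a)
    (h : ∀ w, G.Adj u w → w ≠ a → G.Adj w a) : G.IsClique (G.neighborSet u) := by
  intro p hp q hq hpq
  rcases eq_or_ne p a with rfl | hpa
  · exact (h q hq (Ne.symm hpq)).symm
  rcases eq_or_ne q a with rfl | hqa
  · exact h p hp hpa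
  exact hF.adj_of_common_neighbors hua hpq hp.symm (h p hp hpa) hq.symm (h q hq hqa)

theorem eq_of_adj_of_adj_add_two (e : cycleGraph 6 ↪g G) {u : V} {k : Fin 6}
    (h : G.Adj u (e k)) (h' : G.Adj u (e (k + 2))) : u = e (k + 1) :=
  hF.unique_common_neighbor (x := e k) (y := e (k + 2))
    (e.map_adj_iff.not.2 (by simp +decide [cycleGraph_adj])) (e.injective.ne (by simp +decide))
    h h' (e.map_adj_iff.2 (by simp [cycleGraph_adj])) (e.map_adj_iff.2 (by simp [cycleGraph_adj]))

end IsC4DiamondFree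

structure IsFreeAtom (G : SimpleGraph V) : Prop extends IsC4DiamondFree G where
  connected : G.Connected
  p7Free : IndFree G (pathGraph 7)
  c7Free : IndFree G (cycleGraph 7)
  not_hasCliqueCutset : ¬ HasCliqueCutset G
  two_lt_ncard : ∀ v, 2 < (G.neighborSet v).ncard

namespace IsFreeAtom

variable (hG : IsFreeAtom G)
include hG

theorem exists_adj_ne_ne (v x y : V) : ∃ z, G.Adj z v ∧ z ≠ x ∧ z ≠ y := by
  obtain ⟨z, hz, hxy⟩ := Set.exists_mem_notMem_of_ncard_lt_ncard (s := {x, y})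
    ((Set.ncard_insert_le x {y}).trans_lt (by simpa using hG.two_lt_ncard v))
  simp only [Set.mem_insert_iff, Set.mem_singleton_iff, not_or] at hxy
  exact ⟨z, hz.symm, hxy⟩

theorem exists_adj_not_adj {u a b : V} (hua : G.Adj u a) (hub : ¬ G.Adj u b) (hbu : b ≠ u) :
    ∃ w, G.Adj u w ∧ w ≠ a ∧ ¬ G.Adj w a := by
  by_contra! h
  refine hG.not_hasCliqueCutset (hasCliqueCutset_of_forall_adj_mem hG.connected
    (hG.isClique_neighborSet hua h) (S := {u}) (by simp) ?_ rfl hbu hub)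
  rintro x rfl y hy
  exact Or.inr hy

theorem false_of_path7 (f : Fin 7 → V)
    (hf : ∀ i j, i < j → (G.Adj (f i) (f j) ↔ (pathGraph 7).Adj i j) := by
      intro i j _; fin_cases i <;> fin_cases j <;> simp_all +decide [pathGraph_adj, adj_comm] <;>
        first | exact Adj.symm ‹_› | exact fun h => ‹¬ G.Adj _ _› h.symm) :
    False :=
  hG.p7Free.false_of_adj_iff (by simp only [pathGraph_adj]; decide) f hf

theorem false_of_cycle7 (f : Fin 7 → V)
    (hf : ∀ i j, i < j → (G.Adj (f i) (f j) ↔ (cycleGraph 7).Adj i j) := by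
      intro i j _; fin_cases i <;> fin_cases j <;> simp_all +decide [adj_comm] <;>
        first | exact Adj.symm ‹_› | exact fun h => ‹¬ G.Adj _ _› h.symm) :
    False :=
  hG.c7Free.false_of_adj_iff (by decide) f hf

section Hexagon

variable (e : cycleGraph 6 ↪g G) {u w y : V}

theorem adj_iff_of_adj_zero_one (h0 : G.Adj u (e 0)) (h1 : G.Adj u (e 1)) :
    ∀ k, G.Adj u (e k) ↔ k = 0 ∨ k = 1 := by
  have h2 : ¬ G.Adj u (e 2) := fun h => h1.ne (hG.eq_of_adj_of_adj_add_two e h0 h)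
  have h5 : ¬ G.Adj u (e 5) := fun h => h0.ne (hG.eq_of_adj_of_adj_add_two e h h1)
  have h3 : ¬ G.Adj u (e 3) := fun h => hG.false_of_square ![u, e 1, e 2, e 3]
  have h4 : ¬ G.Adj u (e 4) := fun h => hG.false_of_square ![u, e 0, e 5, e 4]
  intro k
  fin_cases k <;> simp [*]

theorem false_of_adj_zero_one_of_adj_three (hu : ∀ k, G.Adj u (e k) ↔ k = 0 ∨ k = 1)
    (hw : ∀ k, G.Adj w (e k) ↔ k = 3) (huw : G.Adj u w) : False := by
  obtain ⟨x, hx5, hx4, hx0⟩ := hG.exists_adj_ne_ne (e 5) (e 4) (e 0)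
  have hx1 : ¬ G.Adj x (e 1) := fun h => hx0 (hG.eq_of_adj_of_adj_add_two e hx5 h)
  have hx3 : ¬ G.Adj x (e 3) := fun h => hx4 (hG.eq_of_adj_of_adj_add_two e h hx5)
  have hux : ¬ G.Adj u x := fun h => hG.false_of_square ![u, x, e 5, e 0]
  by_cases hx2 : G.Adj x (e 2)
  · have hx4' : ¬ G.Adj x (e 4) := fun h => hG.false_of_square ![x, e 2, e 3, e 4]
    have hwx : ¬ G.Adj w x := fun h => hG.false_of_square ![x, e 2, e 3, w]
    exact hG.false_of_path7 ![e 1, u, w, e 3, e 4, e 5, x]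
  by_cases hx4' : G.Adj x (e 4)
  · have hwx : ¬ G.Adj w x := fun h => hG.false_of_square ![x, e 4, e 3, w]
    have hx0' : ¬ G.Adj x (e 0) := fun h => hx5.ne (hG.eq_of_adj_of_adj_add_two e hx4' h)
    exact hG.false_of_path7 ![e 2, e 3, w, u, e 0, e 5, x]
  exact hG.false_of_path7 ![u, e 1, e 2, e 3, e 4, e 5, x]

theorem false_of_adj_zero_one_of_adj_three_four (hu : ∀ k, G.Adj u (e k) ↔ k = 0 ∨ k = 1)
    (hw : ∀ k, G.Adj w (e k) ↔ k = 3 ∨ k = 4) (huw : G.Adj u w) : False := by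
  obtain ⟨x, hx2, hx1, hx3⟩ := hG.exists_adj_ne_ne (e 2) (e 1) (e 3)
  have hx0 : ¬ G.Adj x (e 0) := fun h => hx1 (hG.eq_of_adj_of_adj_add_two e h hx2)
  have hx4 : ¬ G.Adj x (e 4) := fun h => hx3 (hG.eq_of_adj_of_adj_add_two e hx2 h)
  have hux : ¬ G.Adj u x := fun h => hG.false_of_square ![u, x, e 2, e 1]
  have hwx : ¬ G.Adj w x := fun h => hG.false_of_square ![w, x, e 2, e 3]
  by_cases hx3' : G.Adj x (e 3)
  · have hx1' : ¬ G.Adj x (e 1) := fun h => hx2.ne (hG.eq_of_adj_of_adj_add_two e h hx3')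
    have hx5 : ¬ G.Adj x (e 5) := fun h => hG.false_of_square ![x, e 3, e 4, e 5]
    exact hG.false_of_path7 ![e 5, e 4, w, u, e 1, e 2, x]
  by_cases hx5 : G.Adj x (e 5)
  · exact hG.false_of_cycle7 ![u, e 0, e 5, x, e 2, e 3, w]
  exact hG.false_of_path7 ![u, e 0, e 5, e 4, e 3, e 2, x]

theorem not_adj_one_of_adj_zero (h0 : G.Adj u (e 0)) : ¬ G.Adj u (e 1) := by
  intro h1
  have hu := hG.adj_iff_of_adj_zero_one e h0 h1
  obtain ⟨w, huw, hw0, hnw0⟩ := hG.exists_adj_not_adj h0 (b := e 3) (by simp [hu])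
    (e.ne_of_forall_adj_iff hu (by decide) 3).symm
  have hw1 : ¬ G.Adj w (e 1) := fun h =>
    hnw0 (hG.adj_of_common_neighbors h1 hw0 huw.symm h h0.symm (e.map_adj_iff.2 (by decide)))
  have hw2 : ¬ G.Adj w (e 2) := fun h => hG.false_of_square ![u, w, e 2, e 1]
  have hw5 : ¬ G.Adj w (e 5) := fun h => hG.false_of_square ![u, w, e 5, e 0]
  by_cases hw3 : G.Adj w (e 3) <;> by_cases hw4 : G.Adj w (e 4)
  · exact hG.false_of_adj_zero_one_of_adj_three_four e hu
      (fun k => by fin_cases k <;> simp [*]) huw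
  · exact hG.false_of_adj_zero_one_of_adj_three e hu (fun k => by fin_cases k <;> simp [*]) huw
  · have hw : ∀ k, G.Adj w (e k) ↔ k = 4 := fun k => by fin_cases k <;> simp [*]
    exact hG.false_of_adj_zero_one_of_adj_three (e.cycleReflect 1)
      (fun k => (hu _).trans (by revert k; decide)) (fun k => (hw _).trans (by revert k; decide))
      huw
  · exact hG.false_of_path7 ![e 2, e 3, e 4, e 5, e 0, u, w]

theorem not_adj_add_one {k : Fin 6} (h : G.Adj u (e k)) : ¬ G.Adj u (e (k + 1)) := by
  simpa [add_comm] using hG.not_adj_one_of_adj_zero (e.cycleRotate k) (by simpa using h)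

theorem adj_iff_eq_three_of_adj (hu : ∀ k, G.Adj u (e k) ↔ k = 0) (huw : G.Adj u w)
    (hw0 : w ≠ e 0) (hnw0 : ¬ G.Adj w (e 0)) : ∀ k, G.Adj w (e k) ↔ k = 3 := by
  have hw1 : ¬ G.Adj w (e 1) := fun h => hG.false_of_square ![u, w, e 1, e 0]
  have hw5 : ¬ G.Adj w (e 5) := fun h => hG.false_of_square ![u, w, e 5, e 0]
  have hw2 : ¬ G.Adj w (e 2) := by
    intro hw2
    have hw3 : ¬ G.Adj w (e 3) := hG.not_adj_add_one e hw2
    have hw4 : ¬ G.Adj w (e 4) := fun h => hG.false_of_square ![w, e 2, e 3, e 4]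
    exact hG.false_of_cycle7 ![u, e 0, e 5, e 4, e 3, e 2, w]
  have hw4 : ¬ G.Adj w (e 4) := by
    intro hw4
    have hw3 : ¬ G.Adj w (e 3) := fun h => hG.not_adj_add_one e h hw4
    exact hG.false_of_cycle7 ![u, e 0, e 1, e 2, e 3, e 4, w]
  have hw3 : G.Adj w (e 3) := by
    by_contra hw3
    exact hG.false_of_path7 ![e 2, e 3, e 4, e 5, e 0, u, w]
  intro k
  fin_cases k <;> simp [*]

theorem false_of_adj_iff_eq_zero (hu : ∀ k, G.Adj u (e k) ↔ k = 0) : False := by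
  obtain ⟨w, huw, hw0, hnw0⟩ := hG.exists_adj_not_adj ((hu 0).2 rfl) (b := e 3) (by simp [hu])
    (e.ne_of_forall_adj_iff hu (by decide) 3).symm
  have hw := hG.adj_iff_eq_three_of_adj e hu huw hw0 hnw0
  obtain ⟨x, hx1, hx0, hx2⟩ := hG.exists_adj_ne_ne (e 1) (e 0) (e 2)
  have hnx0 : ¬ G.Adj x (e 0) := fun h => hG.not_adj_add_one e h hx1
  have hx3 : ¬ G.Adj x (e 3) := fun h => hx2 (hG.eq_of_adj_of_adj_add_two e hx1 h)
  have hux : ¬ G.Adj u x := fun h =>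
    absurd ((hG.adj_iff_eq_three_of_adj e hu h hx0 hnx0 1).1 hx1) (by decide)
  have hwx : ¬ G.Adj w x := fun h =>
    absurd ((hG.adj_iff_eq_three_of_adj (e.cycleRotate 3)
      (fun k => (hw _).trans (by revert k; decide)) h
      (G.ne_of_adj_of_not_adj hx1 (e.map_adj_iff.not.2 (by decide))) hx3 4).1 hx1) (by decide)
  by_cases hx4 : G.Adj x (e 4)
  · exact hG.false_of_cycle7 ![u, e 0, e 1, x, e 4, e 3, w]
  · exact hG.false_of_path7 ![e 4, e 3, w, u, e 0, e 1, x]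

theorem adj_iff_of_adj_zero (h0 : G.Adj y (e 0)) (h1 : y ≠ e 1) (h5 : y ≠ e 5) :
    ∀ k, G.Adj y (e k) ↔ k = 0 ∨ k = 3 := by
  have hy1 : ¬ G.Adj y (e 1) := hG.not_adj_add_one e h0
  have hy5 : ¬ G.Adj y (e 5) := fun h => hG.not_adj_add_one e h h0
  have hy2 : ¬ G.Adj y (e 2) := fun h => h1 (hG.eq_of_adj_of_adj_add_two e h0 h)
  have hy4 : ¬ G.Adj y (e 4) := fun h => h5 (hG.eq_of_adj_of_adj_add_two e h h0)
  have hy3 : G.Adj y (e 3) := by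
    by_contra hy3
    exact hG.false_of_adj_iff_eq_zero e (u := y) (fun k => by fin_cases k <;> simp [*])
  intro k
  fin_cases k <;> simp [*]

theorem exists_spoke (a : Fin 6) : ∃ t, ∀ k, G.Adj t (e k) ↔ k = a ∨ k = a + 3 := by
  obtain ⟨t, ht, ht1, ht5⟩ := hG.exists_adj_ne_ne (e a) (e (a + 1)) (e (a + 5))
  have := hG.adj_iff_of_adj_zero (e.cycleRotate a) (by simpa using ht)
    (by simpa [add_comm] using ht1) (by simpa [add_comm] using ht5)
  refine ⟨t, fun k => ?_⟩
  simpa [sub_eq_zero, sub_eq_iff_eq_add, add_comm] using this (k - a)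

section Spokes

variable {t : Fin 3 → V} (ht : ∀ j k, G.Adj (t j) (e k) ↔ (k : ℕ) % 3 = j) {h z : V}
include ht

omit hG in
theorem spoke_ne (j : Fin 3) (k : Fin 6) : t j ≠ e k :=
  e.ne_of_forall_adj_iff (ht j) (by revert j; decide) k

theorem spokes_not_adj (i j : Fin 3) : ¬ G.Adj (t i) (t j) := by
  intro hij
  have hne := spoke_ne e ht
  have hne' : ∀ j k, e k ≠ t j := fun j k => (hne j k).symm
  fin_cases i <;> fin_cases j
  · exact hij.ne rfl
  · exact hG.false_of_square ![t 0, e 0, e 1, t 1]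
  · exact hG.false_of_square ![t 0, e 0, e 5, t 2]
  · exact hG.false_of_square ![t 1, e 1, e 0, t 0]
  · exact hij.ne rfl
  · exact hG.false_of_square ![t 1, e 1, e 2, t 2]
  · exact hG.false_of_square ![t 2, e 5, e 0, t 0]
  · exact hG.false_of_square ![t 2, e 2, e 1, t 1]
  · exact hij.ne rfl

theorem eq_or_eq_spoke_of_adj {k : Fin 6} (hy : G.Adj y (e k)) :
    (∃ i, y = e i) ∨ ∃ j, y = t j := by
  by_cases h1 : y = e (k + 1)
  · exact Or.inl ⟨_, h1⟩
  by_cases h5 : y = e (k + 5)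
  · exact Or.inl ⟨_, h5⟩
  have hy' := hG.adj_iff_of_adj_zero (e.cycleRotate k) (by simpa using hy)
    (by simpa [add_comm] using h1) (by simpa [add_comm] using h5)
  refine Or.inr ⟨⟨k % 3, Nat.mod_lt _ (by norm_num)⟩, hG.unique_common_neighbor
    (x := e k) (y := e (k + 3)) (e.map_adj_iff.not.2 (by simp +decide [cycleGraph_adj]))
    (e.injective.ne (by simp +decide)) hy (by simpa [add_comm] using (hy' 3).2 (by simp))
    ((ht _ _).2 rfl) ((ht _ _).2 ?_)⟩
  simp only [Fin.val_add]
  omega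

theorem false_of_adj_spoke_zero_of_adj (hz : ∀ k, ¬ G.Adj z (e k))
    (hy : ∀ k, ¬ G.Adj y (e k)) (hzy : G.Adj z y) (h0 : G.Adj z (t 0)) (h1 : ¬ G.Adj z (t 1))
    (h2 : ¬ G.Adj z (t 2)) (hy0 : ¬ G.Adj y (t 0)) : False := by
  have htt := hG.spokes_not_adj e ht
  by_cases hy1 : G.Adj y (t 1) <;> by_cases hy2 : G.Adj y (t 2)
  · exact hG.false_of_path7 ![t 1, y, t 2, e 2, e 3, t 0, e 0]
  · exact hG.false_of_path7 ![t 0, z, y, t 1, e 1, e 2, t 2]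
  · exact hG.false_of_path7 ![t 0, z, y, t 2, e 2, e 1, t 1]
  · exact hG.false_of_path7 ![t 1, e 1, e 2, e 3, t 0, z, y]

theorem adj_spoke_one_two_of_adj_spoke_zero (hz : ∀ k, ¬ G.Adj z (e k)) (h0 : G.Adj z (t 0)) :
    G.Adj z (t 1) ∧ G.Adj z (t 2) := by
  have htt := hG.spokes_not_adj e ht
  by_cases h1 : G.Adj z (t 1) <;> by_cases h2 : G.Adj z (t 2)
  · exact ⟨h1, h2⟩
  · exact (hG.false_of_path7 ![t 0, z, t 1, e 1, e 2, t 2, e 5]).elim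
  · exact (hG.false_of_path7 ![t 0, z, t 2, e 2, e 1, t 1, e 4]).elim
  obtain ⟨y, hzy, hy0, hny0⟩ := hG.exists_adj_not_adj h0 (b := e 0) (hz 0)
    (fun h => hz 1 (h ▸ e.map_adj_iff.2 (by decide)))
  refine (hG.false_of_adj_spoke_zero_of_adj e ht hz (fun k hk => ?_) hzy h0 h1 h2 hny0).elim
  rcases hG.eq_or_eq_spoke_of_adj e ht hk with ⟨i, rfl⟩ | ⟨j, rfl⟩
  · exact hz i hzy
  · fin_cases j <;> simp_all

theorem adj_spoke_of_adj_spoke (hz : ∀ k, ¬ G.Adj z (e k)) {j : Fin 3} (hj : G.Adj z (t j))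
    (j' : Fin 3) : G.Adj z (t j') := by
  have key : ∀ (i j : Fin 3) (k : Fin 6),
      ((k + Fin.castLE (by norm_num) j : Fin 6) : ℕ) % 3 = (i + j : Fin 3) ↔ (k : ℕ) % 3 = i := by
    decide
  have := hG.adj_spoke_one_two_of_adj_spoke_zero (e.cycleRotate (Fin.castLE (by norm_num) j))
    (t := fun i => t (i + j)) (fun i k => (ht _ _).trans (key i j k)) (fun k => hz _)
    (by simpa using hj)
  obtain ⟨i, rfl⟩ : ∃ i, j' = i + j := ⟨j' - j, by simp⟩
  fin_cases i
  · simpa using hj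
  · exact this.1
  · exact this.2

theorem exists_hub : ∃ h, (∀ k, ¬ G.Adj h (e k)) ∧ ∀ j, G.Adj h (t j) := by
  obtain ⟨h, hh, hh0, hh3⟩ := hG.exists_adj_ne_ne (t 0) (e 0) (e 3)
  have hfar : ∀ k, ¬ G.Adj h (e k) := by
    intro k hk
    rcases hG.eq_or_eq_spoke_of_adj e ht hk with ⟨i, rfl⟩ | ⟨j, rfl⟩
    · have := (ht 0 i).1 hh.symm
      fin_cases i <;> simp_all
    · exact hG.spokes_not_adj e ht j 0 hh
  exact ⟨h, hfar, hG.adj_spoke_of_adj_spoke e ht hfar hh⟩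

theorem eq_of_adj_spoke (hht : ∀ j, G.Adj h (t j)) (hz : ∀ k, ¬ G.Adj z (e k)) {j : Fin 3}
    (hzj : G.Adj z (t j)) : z = h :=
  hG.unique_common_neighbor (hG.spokes_not_adj e ht 0 1)
    (G.ne_of_adj_of_not_adj ((ht 0 0).2 rfl) ((ht 1 0).not.2 (by decide)))
    (hG.adj_spoke_of_adj_spoke e ht hz hzj 0) (hG.adj_spoke_of_adj_spoke e ht hz hzj 1)
    (hht 0) (hht 1)

theorem false_of_adj_hub (hh : ∀ k, ¬ G.Adj h (e k)) (hht : ∀ j, G.Adj h (t j))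
    (hy : ∀ k, ¬ G.Adj y (e k)) (hyh : G.Adj y h) : False := by
  have he0 : G.Adj (e 0) (e 1) := e.map_adj_iff.2 (by decide)
  refine hG.not_hasCliqueCutset (hasCliqueCutset_of_forall_adj_mem hG.connected
    (G.isClique_singleton h) (S := {x | (∀ k, ¬ G.Adj x (e k)) ∧ x ≠ h})
    (Set.disjoint_singleton_right.2 fun hx => hx.2 rfl) ?_ (a := y) (b := e 0)
    ⟨hy, hyh.ne⟩ (fun hb => hb.1 1 he0) (fun hb => hh 1 (Set.mem_singleton_iff.1 hb ▸ he0)))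
  rintro x ⟨hx, hxh⟩ w hxw
  by_cases hw : w = h
  · exact Or.inr hw
  refine Or.inl ⟨fun k hk => ?_, hw⟩
  rcases hG.eq_or_eq_spoke_of_adj e ht hk with ⟨i, rfl⟩ | ⟨j, rfl⟩
  · exact hx i hxw
  · exact hxh (hG.eq_of_adj_spoke e ht hht hx hxw)

end Spokes

end Hexagon

theorem nonempty_iso_petersenModel (e : cycleGraph 6 ↪g G) : Nonempty (G ≃g petersenModel) := by
  choose s hs using hG.exists_spoke e
  obtain ⟨t, ht⟩ : ∃ t : Fin 3 → V, ∀ j k, G.Adj (t j) (e k) ↔ (k : ℕ) % 3 = j :=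
    ⟨fun j => s (Fin.castLE (by norm_num) j), fun j k => (hs _ k).trans (by revert j k; decide)⟩
  obtain ⟨h, hh, hht⟩ := hG.exists_hub e ht
  have htt := hG.spokes_not_adj e ht
  let φ : Fin 6 ⊕ Fin 3 ⊕ Unit → V := Sum.elim e (Sum.elim t fun _ => h)
  have hφ : ∀ x y, G.Adj (φ x) (φ y) ↔ petersenModel.Adj x y := by
    rintro (i | j | ⟨⟩) (i' | j' | ⟨⟩) <;>
      simp [φ, petersenModel, petersenModelAdj, ht, htt, hh, hht, adj_comm]
  have hclosed : ∀ x y, G.Adj (φ x) y → y ∈ Set.range φ := by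
    intro x y hxy
    by_cases hy : ∃ k, G.Adj y (e k)
    · obtain ⟨k, hk⟩ := hy
      rcases hG.eq_or_eq_spoke_of_adj e ht hk with ⟨i, rfl⟩ | ⟨j, rfl⟩
      · exact ⟨.inl i, rfl⟩
      · exact ⟨.inr (.inl j), rfl⟩
    push Not at hy
    rcases x with i | j | ⟨⟩
    · exact (hy i hxy.symm).elim
    · exact ⟨.inr (.inr ()), (hG.eq_of_adj_spoke e ht hht hy hxy.symm).symm⟩
    · exact (hG.false_of_adj_hub e ht hh hht hy hxy.symm).elim
  obtain ⟨ι⟩ := hG.connected.nonempty_iso_of_adj_iff (by decide) hφ hclosed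
  exact ⟨ι.symm⟩

end IsFreeAtom

end

theorem stmt_15_general {V : Type*} (G : SimpleGraph V) (hconn : G.Connected)
    (hP7 : IndFree G (pathGraph 7)) (hC7 : IndFree G (cycleGraph 7))
    (hC4 : IndFree G (cycleGraph 4)) (hdiamond : IndFree G diamondGraph)
    (hC6 : Nonempty (cycleGraph 6 ↪g G)) :
    HasCliqueCutset G ∨ (∃ v : V, (G.neighborSet v).ncard ≤ 2) ∨
      Nonempty (G ≃g petersenGraph) := by
  by_cases hcut : HasCliqueCutset G
  · exact Or.inl hcut
  by_cases hdeg : ∃ v : V, (G.neighborSet v).ncard ≤ 2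
  · exact Or.inr (Or.inl hdeg)
  push Not at hdeg
  obtain ⟨e⟩ := hC6
  have hG : IsFreeAtom G := ⟨⟨hC4, hdiamond⟩, hconn, hP7, hC7, hcut, hdeg⟩
  obtain ⟨ι⟩ := hG.nonempty_iso_petersenModel e
  obtain ⟨κ⟩ := nonempty_petersenModel_iso
  exact Or.inr (Or.inr ⟨ι.trans κ⟩)

theorem stmt_15 {V : Type*} [Fintype V] (G : SimpleGraph V) (hconn : G.Connected)
    (hP7 : IndFree G (pathGraph 7)) (hC7 : IndFree G (cycleGraph 7))
    (hC4 : IndFree G (cycleGraph 4)) (hdiamond : IndFree G diamondGraph)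
    (hC6 : Nonempty (cycleGraph 6 ↪g G)) :
    HasCliqueCutset G ∨ (∃ v : V, (G.neighborSet v).ncard ≤ 2) ∨
      Nonempty (G ≃g petersenGraph) :=
  stmt_15_general G hconn hP7 hC7 hC4 hdiamond hC6
end

section
/- Let G be a finite connected simple graph that is (P7, C7, C6, C4, diamond)-free and contains an induced cycle on 5 vertices. Then G has a clique cutset, or G has a vertex of degree at most ω(G), where ω(G) is the clique number of G. -/
open SimpleGraph

set_option linter.unusedSectionVars false



namespace StmtAux

instance : DecidableRel diamondGraph.Adj := fun x y =>
  decidable_of_iff ((s(x,y) = s(0,1) ∨ s(x,y) = s(0,2) ∨ s(x,y) = s(0,3) ∨ s(x,y) = s(1,2)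
      ∨ s(x,y) = s(1,3)) ∧ x ≠ y) (by
    simp only [diamondGraph, fromEdgeSet_adj, Set.mem_insert_iff, Set.mem_singleton_iff])

instance (n : ℕ) : DecidableRel (pathGraph n).Adj := fun _ _ =>
  decidable_of_iff _ (pathGraph_adj).symm

variable {V : Type*} {G : SimpleGraph V}

def embedOf {n : ℕ} {H : SimpleGraph (Fin n)} (w : Fin n → V)
    (hinj : ∀ i j : Fin n, i ≠ j → w i ≠ w j)
    (hiff : ∀ i j : Fin n, H.Adj i j ↔ G.Adj (w i) (w j)) : H ↪g G :=
  ⟨⟨w, fun {a b} hab => by by_contra hne; exact hinj a b hne hab⟩,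
   @fun a b => (hiff a b).symm⟩

lemma noC4 (h4 : IsEmpty (cycleGraph 4 ↪g G)) {a b c d : V}
    (e1 : G.Adj a b) (e2 : G.Adj b c) (e3 : G.Adj c d) (e4 : G.Adj d a)
    (n1 : ¬ G.Adj a c) (n2 : ¬ G.Adj b d) (q1 : a ≠ c) (q2 : b ≠ d) : False := by
  have e1' := e1.symm; have e2' := e2.symm; have e3' := e3.symm; have e4' := e4.symm
  have n1' : ¬ G.Adj c a := fun h => n1 h.symm
  have n2' : ¬ G.Adj d b := fun h => n2 h.symm
  have p1 := e1.ne; have p2 := e2.ne; have p3 := e3.ne; have p4 := e4.ne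
  have p1' := e1.ne'; have p2' := e2.ne'; have p3' := e3.ne'; have p4' := e4.ne'
  have q1' := q1.symm; have q2' := q2.symm
  have r1 : ¬ G.Adj a a := G.irrefl; have r2 : ¬ G.Adj b b := G.irrefl
  have r3 : ¬ G.Adj c c := G.irrefl; have r4 : ¬ G.Adj d d := G.irrefl
  refine h4.false (embedOf ![a,b,c,d] ?_ ?_)
  · intro i j hij; fin_cases i <;> fin_cases j <;>
      first | exact absurd rfl hij | assumption
  · intro i j; fin_cases i <;> fin_cases j <;>
      first
        | exact iff_of_true (by decide) (by assumption)
        | exact iff_of_false (by decide) (by assumption)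

lemma noDiamond (hd : IsEmpty (diamondGraph ↪g G)) {a b c d : V}
    (e1 : G.Adj a b) (e2 : G.Adj a c) (e3 : G.Adj a d) (e4 : G.Adj b c) (e5 : G.Adj b d)
    (n1 : ¬ G.Adj c d) (q1 : c ≠ d) : False := by
  have e1' := e1.symm; have e2' := e2.symm; have e3' := e3.symm; have e4' := e4.symm
  have e5' := e5.symm
  have n1' : ¬ G.Adj d c := fun h => n1 h.symm
  have p1 := e1.ne; have p2 := e2.ne; have p3 := e3.ne; have p4 := e4.ne; have p5 := e5.ne
  have p1' := e1.ne'; have p2' := e2.ne'; have p3' := e3.ne'; have p4' := e4.ne'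
  have p5' := e5.ne'
  have q1' := q1.symm
  have r1 : ¬ G.Adj a a := G.irrefl; have r2 : ¬ G.Adj b b := G.irrefl
  have r3 : ¬ G.Adj c c := G.irrefl; have r4 : ¬ G.Adj d d := G.irrefl
  refine hd.false (embedOf ![a,b,c,d] ?_ ?_)
  · intro i j hij; fin_cases i <;> fin_cases j <;>
      first | exact absurd rfl hij | assumption
  · intro i j; fin_cases i <;> fin_cases j <;>
      first
        | exact iff_of_true (by decide) (by assumption)
        | exact iff_of_false (by decide) (by assumption)

lemma noC6 (h6 : IsEmpty (cycleGraph 6 ↪g G)) {a b c d e f : V}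
    (e1 : G.Adj a b) (e2 : G.Adj b c) (e3 : G.Adj c d) (e4 : G.Adj d e) (e5 : G.Adj e f)
    (e6 : G.Adj f a)
    (n1 : ¬ G.Adj a c) (n2 : ¬ G.Adj a d) (n3 : ¬ G.Adj a e)
    (n4 : ¬ G.Adj b d) (n5 : ¬ G.Adj b e) (n6 : ¬ G.Adj b f)
    (n7 : ¬ G.Adj c e) (n8 : ¬ G.Adj c f) (n9 : ¬ G.Adj d f)
    (q1 : a ≠ c) (q2 : a ≠ d) (q3 : a ≠ e) (q4 : b ≠ d) (q5 : b ≠ e) (q6 : b ≠ f)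
    (q7 : c ≠ e) (q8 : c ≠ f) (q9 : d ≠ f) : False := by
  have e1' := e1.symm; have e2' := e2.symm; have e3' := e3.symm; have e4' := e4.symm
  have e5' := e5.symm; have e6' := e6.symm
  have n1' : ¬ G.Adj c a := fun h => n1 h.symm
  have n2' : ¬ G.Adj d a := fun h => n2 h.symm
  have n3' : ¬ G.Adj e a := fun h => n3 h.symm
  have n4' : ¬ G.Adj d b := fun h => n4 h.symm
  have n5' : ¬ G.Adj e b := fun h => n5 h.symm
  have n6' : ¬ G.Adj f b := fun h => n6 h.symm
  have n7' : ¬ G.Adj e c := fun h => n7 h.symm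
  have n8' : ¬ G.Adj f c := fun h => n8 h.symm
  have n9' : ¬ G.Adj f d := fun h => n9 h.symm
  have p1 := e1.ne; have p2 := e2.ne; have p3 := e3.ne; have p4 := e4.ne; have p5 := e5.ne
  have p6 := e6.ne
  have p1' := e1.ne'; have p2' := e2.ne'; have p3' := e3.ne'; have p4' := e4.ne'
  have p5' := e5.ne'; have p6' := e6.ne'
  have q1' := q1.symm; have q2' := q2.symm; have q3' := q3.symm; have q4' := q4.symm
  have q5' := q5.symm; have q6' := q6.symm; have q7' := q7.symm; have q8' := q8.symm
  have q9' := q9.symm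
  have r1 : ¬ G.Adj a a := G.irrefl; have r2 : ¬ G.Adj b b := G.irrefl
  have r3 : ¬ G.Adj c c := G.irrefl; have r4 : ¬ G.Adj d d := G.irrefl
  have r5 : ¬ G.Adj e e := G.irrefl; have r6 : ¬ G.Adj f f := G.irrefl
  refine h6.false (embedOf ![a,b,c,d,e,f] ?_ ?_)
  · intro i j hij; fin_cases i <;> fin_cases j <;>
      first | exact absurd rfl hij | assumption
  · intro i j; fin_cases i <;> fin_cases j <;>
      first
        | exact iff_of_true (by decide) (by assumption)
        | exact iff_of_false (by decide) (by assumption)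

lemma noC7 (h7 : IsEmpty (cycleGraph 7 ↪g G)) {a b c d e f g : V}
    (e1 : G.Adj a b) (e2 : G.Adj b c) (e3 : G.Adj c d) (e4 : G.Adj d e) (e5 : G.Adj e f)
    (e6 : G.Adj f g) (e7 : G.Adj g a)
    (n1 : ¬ G.Adj a c) (n2 : ¬ G.Adj a d) (n3 : ¬ G.Adj a e) (n4 : ¬ G.Adj a f)
    (n5 : ¬ G.Adj b d) (n6 : ¬ G.Adj b e) (n7 : ¬ G.Adj b f) (n8 : ¬ G.Adj b g)
    (n9 : ¬ G.Adj c e) (n10 : ¬ G.Adj c f) (n11 : ¬ G.Adj c g)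
    (n12 : ¬ G.Adj d f) (n13 : ¬ G.Adj d g) (n14 : ¬ G.Adj e g)
    (q1 : a ≠ c) (q2 : a ≠ d) (q3 : a ≠ e) (q4 : a ≠ f)
    (q5 : b ≠ d) (q6 : b ≠ e) (q7 : b ≠ f) (q8 : b ≠ g)
    (q9 : c ≠ e) (q10 : c ≠ f) (q11 : c ≠ g)
    (q12 : d ≠ f) (q13 : d ≠ g) (q14 : e ≠ g) : False := by
  have e1' := e1.symm; have e2' := e2.symm; have e3' := e3.symm; have e4' := e4.symm
  have e5' := e5.symm; have e6' := e6.symm; have e7' := e7.symm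
  have n1' : ¬ G.Adj c a := fun h => n1 h.symm
  have n2' : ¬ G.Adj d a := fun h => n2 h.symm
  have n3' : ¬ G.Adj e a := fun h => n3 h.symm
  have n4' : ¬ G.Adj f a := fun h => n4 h.symm
  have n5' : ¬ G.Adj d b := fun h => n5 h.symm
  have n6' : ¬ G.Adj e b := fun h => n6 h.symm
  have n7' : ¬ G.Adj f b := fun h => n7 h.symm
  have n8' : ¬ G.Adj g b := fun h => n8 h.symm
  have n9' : ¬ G.Adj e c := fun h => n9 h.symm
  have n10' : ¬ G.Adj f c := fun h => n10 h.symm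
  have n11' : ¬ G.Adj g c := fun h => n11 h.symm
  have n12' : ¬ G.Adj f d := fun h => n12 h.symm
  have n13' : ¬ G.Adj g d := fun h => n13 h.symm
  have n14' : ¬ G.Adj g e := fun h => n14 h.symm
  have p1 := e1.ne; have p2 := e2.ne; have p3 := e3.ne; have p4 := e4.ne; have p5 := e5.ne
  have p6 := e6.ne; have p7 := e7.ne
  have p1' := e1.ne'; have p2' := e2.ne'; have p3' := e3.ne'; have p4' := e4.ne'
  have p5' := e5.ne'; have p6' := e6.ne'; have p7' := e7.ne'
  have q1' := q1.symm; have q2' := q2.symm; have q3' := q3.symm; have q4' := q4.symm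
  have q5' := q5.symm; have q6' := q6.symm; have q7' := q7.symm; have q8' := q8.symm
  have q9' := q9.symm; have q10' := q10.symm; have q11' := q11.symm; have q12' := q12.symm
  have q13' := q13.symm; have q14' := q14.symm
  have r1 : ¬ G.Adj a a := G.irrefl; have r2 : ¬ G.Adj b b := G.irrefl
  have r3 : ¬ G.Adj c c := G.irrefl; have r4 : ¬ G.Adj d d := G.irrefl
  have r5 : ¬ G.Adj e e := G.irrefl; have r6 : ¬ G.Adj f f := G.irrefl
  have r7 : ¬ G.Adj g g := G.irrefl
  refine h7.false (embedOf ![a,b,c,d,e,f,g] ?_ ?_)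
  · intro i j hij; fin_cases i <;> fin_cases j <;>
      first | exact absurd rfl hij | assumption
  · intro i j; fin_cases i <;> fin_cases j <;>
      first
        | exact iff_of_true (by decide) (by assumption)
        | exact iff_of_false (by decide) (by assumption)

lemma noP7 (h7 : IsEmpty (pathGraph 7 ↪g G)) {a b c d e f g : V}
    (e1 : G.Adj a b) (e2 : G.Adj b c) (e3 : G.Adj c d) (e4 : G.Adj d e) (e5 : G.Adj e f)
    (e6 : G.Adj f g)
    (n1 : ¬ G.Adj a c) (n2 : ¬ G.Adj a d) (n3 : ¬ G.Adj a e) (n4 : ¬ G.Adj a f)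
    (n5 : ¬ G.Adj a g)
    (n6 : ¬ G.Adj b d) (n7 : ¬ G.Adj b e) (n8 : ¬ G.Adj b f) (n9 : ¬ G.Adj b g)
    (n10 : ¬ G.Adj c e) (n11 : ¬ G.Adj c f) (n12 : ¬ G.Adj c g)
    (n13 : ¬ G.Adj d f) (n14 : ¬ G.Adj d g) (n15 : ¬ G.Adj e g)
    (q1 : a ≠ c) (q2 : a ≠ d) (q3 : a ≠ e) (q4 : a ≠ f) (q5 : a ≠ g)
    (q6 : b ≠ d) (q7 : b ≠ e) (q8 : b ≠ f) (q9 : b ≠ g)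
    (q10 : c ≠ e) (q11 : c ≠ f) (q12 : c ≠ g)
    (q13 : d ≠ f) (q14 : d ≠ g) (q15 : e ≠ g) : False := by
  have e1' := e1.symm; have e2' := e2.symm; have e3' := e3.symm; have e4' := e4.symm
  have e5' := e5.symm; have e6' := e6.symm
  have n1' : ¬ G.Adj c a := fun h => n1 h.symm
  have n2' : ¬ G.Adj d a := fun h => n2 h.symm
  have n3' : ¬ G.Adj e a := fun h => n3 h.symm
  have n4' : ¬ G.Adj f a := fun h => n4 h.symm
  have n5' : ¬ G.Adj g a := fun h => n5 h.symm
  have n6' : ¬ G.Adj d b := fun h => n6 h.symm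
  have n7' : ¬ G.Adj e b := fun h => n7 h.symm
  have n8' : ¬ G.Adj f b := fun h => n8 h.symm
  have n9' : ¬ G.Adj g b := fun h => n9 h.symm
  have n10' : ¬ G.Adj e c := fun h => n10 h.symm
  have n11' : ¬ G.Adj f c := fun h => n11 h.symm
  have n12' : ¬ G.Adj g c := fun h => n12 h.symm
  have n13' : ¬ G.Adj f d := fun h => n13 h.symm
  have n14' : ¬ G.Adj g d := fun h => n14 h.symm
  have n15' : ¬ G.Adj g e := fun h => n15 h.symm
  have p1 := e1.ne; have p2 := e2.ne; have p3 := e3.ne; have p4 := e4.ne; have p5 := e5.ne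
  have p6 := e6.ne
  have p1' := e1.ne'; have p2' := e2.ne'; have p3' := e3.ne'; have p4' := e4.ne'
  have p5' := e5.ne'; have p6' := e6.ne'
  have q1' := q1.symm; have q2' := q2.symm; have q3' := q3.symm; have q4' := q4.symm
  have q5' := q5.symm; have q6' := q6.symm; have q7' := q7.symm; have q8' := q8.symm
  have q9' := q9.symm; have q10' := q10.symm; have q11' := q11.symm; have q12' := q12.symm
  have q13' := q13.symm; have q14' := q14.symm; have q15' := q15.symm
  have r1 : ¬ G.Adj a a := G.irrefl; have r2 : ¬ G.Adj b b := G.irrefl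
  have r3 : ¬ G.Adj c c := G.irrefl; have r4 : ¬ G.Adj d d := G.irrefl
  have r5 : ¬ G.Adj e e := G.irrefl; have r6 : ¬ G.Adj f f := G.irrefl
  have r7 : ¬ G.Adj g g := G.irrefl
  refine h7.false (embedOf ![a,b,c,d,e,f,g] ?_ ?_)
  · intro i j hij; fin_cases i <;> fin_cases j <;>
      first | exact absurd rfl hij | assumption
  · intro i j; fin_cases i <;> fin_cases j <;>
      first
        | exact iff_of_true (by decide) (by assumption)
        | exact iff_of_false (by decide) (by assumption)

end StmtAux


namespace StmtAux

variable {V : Type*}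

def TA (G : SimpleGraph V) (w : Fin 5 → V) (u : V) (i : Fin 5) : Prop :=
  (∀ j, u ≠ w j) ∧ G.Adj u (w i) ∧ ∀ j, j ≠ i → ¬ G.Adj u (w j)

def TB (G : SimpleGraph V) (w : Fin 5 → V) (u : V) (i : Fin 5) : Prop :=
  (∀ j, u ≠ w j) ∧ G.Adj u (w i) ∧ G.Adj u (w (i+1)) ∧
    ∀ j, j ≠ i → j ≠ i + 1 → ¬ G.Adj u (w j)

lemma c5cover : ∀ i j : Fin 5, j = i ∨ j = i+1 ∨ j = i+2 ∨ j = i+3 ∨ j = i+4 := by decide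

lemma addr (k : Fin 5) {a b c : Fin 5} (h : a + b = c) : k + a + b = k + c := by
  rw [add_assoc, h]

lemma addr0 (k : Fin 5) {a b : Fin 5} (h : a + b = 0) : k + a + b = k := by
  rw [add_assoc, h, add_zero]

variable {G : SimpleGraph V} {w : Fin 5 → V}

lemma wadj (hw : ∀ a b : Fin 5, G.Adj (w a) (w b) ↔ (cycleGraph 5).Adj a b)
    {a b : Fin 5} (h : (cycleGraph 5).Adj a b) : G.Adj (w a) (w b) := (hw a b).mpr h

lemma wnadj (hw : ∀ a b : Fin 5, G.Adj (w a) (w b) ↔ (cycleGraph 5).Adj a b)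
    {a b : Fin 5} (h : ¬ (cycleGraph 5).Adj a b) : ¬ G.Adj (w a) (w b) :=
  fun h' => h ((hw a b).mp h')

lemma D_notC (hw : ∀ a b : Fin 5, G.Adj (w a) (w b) ↔ (cycleGraph 5).Adj a b)
    {x : V} (hd : ∀ j, ¬ G.Adj x (w j)) : ∀ j, x ≠ w j :=
  fun j e => hd (j+1) (by
    rw [e]; exact wadj hw ((by decide : ∀ k : Fin 5, (cycleGraph 5).Adj k (k+1)) j))

lemma hw_rot (hw : ∀ a b : Fin 5, G.Adj (w a) (w b) ↔ (cycleGraph 5).Adj a b) (c : Fin 5) :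
    ∀ a b : Fin 5, G.Adj ((fun k => w (c+k)) a) ((fun k => w (c+k)) b) ↔ (cycleGraph 5).Adj a b :=
  fun a b => (hw _ _).trans
    ((by decide : ∀ c a b : Fin 5, ((cycleGraph 5).Adj (c+a) (c+b) ↔ (cycleGraph 5).Adj a b)) c a b)

lemma hwi_rot (hwi : ∀ a b : Fin 5, a ≠ b → w a ≠ w b) (c : Fin 5) :
    ∀ a b : Fin 5, a ≠ b → (fun k => w (c+k)) a ≠ (fun k => w (c+k)) b :=
  fun a b h => hwi _ _ (fun e => h (by exact add_left_cancel e))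

lemma TA_rot (c : Fin 5) {u : V} {i : Fin 5} (h : TA G w u i) :
    TA G (fun k => w (c+k)) u (i - c) := by
  obtain ⟨h1, h2, h3⟩ := h
  refine ⟨fun j => h1 (c+j), ?_, ?_⟩
  · have e : c + (i - c) = i := by abel
    simpa [e] using h2
  · intro j hj
    exact h3 (c+j) (fun e => hj (by rw [show j = c + j - c by abel, e]; try abel))

lemma TB_rot (c : Fin 5) {u : V} {i : Fin 5} (h : TB G w u i) :
    TB G (fun k => w (c+k)) u (i - c) := by
  obtain ⟨h1, h2, h2', h3⟩ := h
  refine ⟨fun j => h1 (c+j), ?_, ?_, ?_⟩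
  · have e : c + (i - c) = i := by abel
    simpa [e] using h2
  · have e : c + (i - c + 1) = i + 1 := by abel
    simpa [e] using h2'
  · intro j hj hj1
    exact h3 (c+j) (fun e => hj (by rw [show j = c + j - c by abel, e]; try abel))
      (fun e => hj1 (by rw [show j = c + j - c by abel, e]; try abel))

lemma no_dist2 (hw : ∀ a b : Fin 5, G.Adj (w a) (w b) ↔ (cycleGraph 5).Adj a b)
    (hwi : ∀ a b : Fin 5, a ≠ b → w a ≠ w b)
    (h4 : IsEmpty (cycleGraph 4 ↪g G)) (hdia : IsEmpty (diamondGraph ↪g G))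
    {u : V} (hu : ∀ j, u ≠ w j) {k : Fin 5}
    (h0 : G.Adj u (w k)) (h2 : G.Adj u (w (k+2))) : False := by
  by_cases h1 : G.Adj u (w (k+1))
  · exact noDiamond hdia h1 h0 h2
      (wadj hw ((by decide : ∀ k : Fin 5, (cycleGraph 5).Adj (k+1) k) k))
      (wadj hw ((by decide : ∀ k : Fin 5, (cycleGraph 5).Adj (k+1) (k+2)) k))
      (wnadj hw ((by decide : ∀ k : Fin 5, ¬ (cycleGraph 5).Adj k (k+2)) k))
      (hwi _ _ ((by decide : ∀ k : Fin 5, k ≠ k+2) k))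
  · exact noC4 h4 h0
      (wadj hw ((by decide : ∀ k : Fin 5, (cycleGraph 5).Adj k (k+1)) k))
      (wadj hw ((by decide : ∀ k : Fin 5, (cycleGraph 5).Adj (k+1) (k+2)) k))
      h2.symm h1
      (wnadj hw ((by decide : ∀ k : Fin 5, ¬ (cycleGraph 5).Adj k (k+2)) k))
      (hu _)
      (hwi _ _ ((by decide : ∀ k : Fin 5, k ≠ k+2) k))

lemma classify (hw : ∀ a b : Fin 5, G.Adj (w a) (w b) ↔ (cycleGraph 5).Adj a b)
    (hwi : ∀ a b : Fin 5, a ≠ b → w a ≠ w b)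
    (h4 : IsEmpty (cycleGraph 4 ↪g G)) (hdia : IsEmpty (diamondGraph ↪g G))
    (u : V) (hu : ∀ j, u ≠ w j) :
    (∀ j, ¬ G.Adj u (w j)) ∨ (∃ i, TA G w u i) ∨ (∃ i, TB G w u i) := by
  by_cases hex : ∀ j, ¬ G.Adj u (w j)
  · exact Or.inl hex
  push_neg at hex
  obtain ⟨i, hi0⟩ := hex
  right
  have nd2 : ∀ k : Fin 5, G.Adj u (w k) → G.Adj u (w (k+2)) → False :=
    fun k a b => no_dist2 hw hwi h4 hdia hu a b
  by_cases h1 : G.Adj u (w (i+1))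
  · refine Or.inr ⟨i, hu, hi0, h1, ?_⟩
    intro j hj hj1 hadj
    rcases c5cover i j with h | rfl | rfl | rfl | rfl
    · exact hj h
    · exact hj1 rfl
    · exact nd2 i hi0 hadj
    · exact nd2 (i+1) h1 (by
        have e : i + 1 + 2 = i + 3 := addr i (by decide)
        rw [e]; exact hadj)
    · exact nd2 (i+4) hadj (by
        have e : i + 4 + 2 = i + 1 := addr i (by decide)
        rw [e]; exact h1)
  · by_cases hm : G.Adj u (w (i+4))
    · refine Or.inr ⟨i+4, hu, hm, ?_, ?_⟩
      · rw [addr0 i (by decide : (4:Fin 5)+1 = 0)]; exact hi0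
      · intro j hj hj1 hadj
        rcases c5cover i j with h | rfl | rfl | rfl | rfl
        · exact hj1 (h.trans (addr0 i (by decide : (4:Fin 5)+1 = 0)).symm)
        · exact h1 hadj
        · exact nd2 i hi0 hadj
        · exact nd2 (i+3) hadj (by
            have e : i + 3 + 2 = i := addr0 i (by decide)
            rw [e]; exact hi0)
        · exact hj rfl
    · refine Or.inl ⟨i, hu, hi0, ?_⟩
      intro j hj hadj
      rcases c5cover i j with h | rfl | rfl | rfl | rfl
      · exact hj h
      · exact h1 hadj
      · exact nd2 i hi0 hadj
      · exact nd2 (i+3) hadj (by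
          have e : i + 3 + 2 = i := addr0 i (by decide)
          rw [e]; exact hi0)
      · exact hm hadj

end StmtAux


namespace StmtAux

variable {V : Type*} {G : SimpleGraph V} {w : Fin 5 → V}

section Struct

variable (hw : ∀ a b : Fin 5, G.Adj (w a) (w b) ↔ (cycleGraph 5).Adj a b)
variable (hwi : ∀ a b : Fin 5, a ≠ b → w a ≠ w b)

include hw hwi

/-- A_i is anticomplete to A_{i+1} (C4) -/
lemma L_AA1 (h4 : IsEmpty (cycleGraph 4 ↪g G)) {u u' : V} {i : Fin 5}
    (hu : TA G w u i) (hu' : TA G w u' (i+1)) (hadj : G.Adj u u') : False :=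
  noC4 h4 hadj hu'.2.1
    (wadj hw ((by decide : ∀ k : Fin 5, (cycleGraph 5).Adj (k+1) k) i))
    hu.2.1.symm
    (hu.2.2 (i+1) ((by decide : ∀ k : Fin 5, k+1 ≠ k) i))
    (hu'.2.2 i ((by decide : ∀ k : Fin 5, k ≠ k+1) i))
    (hu.1 _) (hu'.1 _)

/-- A_i is anticomplete to A_{i+2} (C6) -/
lemma L_AA2 (h6 : IsEmpty (cycleGraph 6 ↪g G)) {u u' : V} {i : Fin 5}
    (hu : TA G w u i) (hu' : TA G w u' (i+2)) (hadj : G.Adj u u') : False :=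
  noC6 h6 hadj hu'.2.1
    (wadj hw ((by decide : ∀ k : Fin 5, (cycleGraph 5).Adj (k+2) (k+3)) i))
    (wadj hw ((by decide : ∀ k : Fin 5, (cycleGraph 5).Adj (k+3) (k+4)) i))
    (wadj hw ((by decide : ∀ k : Fin 5, (cycleGraph 5).Adj (k+4) k) i))
    hu.2.1.symm
    (hu.2.2 (i+2) ((by decide : ∀ k : Fin 5, k+2 ≠ k) i))
    (hu.2.2 (i+3) ((by decide : ∀ k : Fin 5, k+3 ≠ k) i))
    (hu.2.2 (i+4) ((by decide : ∀ k : Fin 5, k+4 ≠ k) i))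
    (hu'.2.2 (i+3) ((by decide : ∀ k : Fin 5, k+3 ≠ k+2) i))
    (hu'.2.2 (i+4) ((by decide : ∀ k : Fin 5, k+4 ≠ k+2) i))
    (hu'.2.2 i ((by decide : ∀ k : Fin 5, k ≠ k+2) i))
    (wnadj hw ((by decide : ∀ k : Fin 5, ¬ (cycleGraph 5).Adj (k+2) (k+4)) i))
    (wnadj hw ((by decide : ∀ k : Fin 5, ¬ (cycleGraph 5).Adj (k+2) k) i))
    (wnadj hw ((by decide : ∀ k : Fin 5, ¬ (cycleGraph 5).Adj (k+3) k) i))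
    (hu.1 _) (hu.1 _) (hu.1 _) (hu'.1 _) (hu'.1 _) (hu'.1 _)
    (hwi _ _ ((by decide : ∀ k : Fin 5, k+2 ≠ k+4) i))
    (hwi _ _ ((by decide : ∀ k : Fin 5, k+2 ≠ k) i))
    (hwi _ _ ((by decide : ∀ k : Fin 5, k+3 ≠ k) i))

/-- different A classes are anticomplete -/
lemma L_AA (h4 : IsEmpty (cycleGraph 4 ↪g G)) (h6 : IsEmpty (cycleGraph 6 ↪g G))
    {u u' : V} {i j : Fin 5}
    (hu : TA G w u i) (hu' : TA G w u' j) (hij : j ≠ i) (hadj : G.Adj u u') : False := by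
  rcases c5cover i j with h | rfl | rfl | rfl | rfl
  · exact hij h
  · exact L_AA1 hw hwi h4 hu hu' hadj
  · exact L_AA2 hw hwi h6 hu hu' hadj
  · exact L_AA2 hw hwi h6 hu' (by
      have e : i + 3 + 2 = i := addr0 i (by decide)
      rw [← e] at hu; exact hu) hadj.symm
  · exact L_AA1 hw hwi h4 hu' (by
      have e : i + 4 + 1 = i := addr0 i (by decide)
      rw [← e] at hu; exact hu) hadj.symm

/-- A_i is anticomplete to B_i (diamond) -/
lemma L_AB0 (hdia : IsEmpty (diamondGraph ↪g G)) {u b : V} {i : Fin 5}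
    (hu : TA G w u i) (hb : TB G w b i) (hadj : G.Adj u b) : False :=
  noDiamond hdia hb.2.1.symm hu.2.1.symm
    (wadj hw ((by decide : ∀ k : Fin 5, (cycleGraph 5).Adj k (k+1)) i))
    hadj.symm hb.2.2.1
    (hu.2.2 (i+1) ((by decide : ∀ k : Fin 5, k+1 ≠ k) i))
    (hu.1 _)

/-- A_i is anticomplete to B_{i+4} (diamond) -/
lemma L_AB4 (hdia : IsEmpty (diamondGraph ↪g G)) {u b : V} {i : Fin 5}
    (hu : TA G w u i) (hb : TB G w b (i+4)) (hadj : G.Adj u b) : False := by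
  have e : i + 4 + 1 = i := addr0 i (by decide)
  have hbw : G.Adj b (w i) := by rw [← e]; exact hb.2.2.1
  exact noDiamond hdia hbw.symm hu.2.1.symm
    (wadj hw ((by decide : ∀ k : Fin 5, (cycleGraph 5).Adj k (k+4)) i))
    hadj.symm hb.2.1
    (hu.2.2 (i+4) ((by decide : ∀ k : Fin 5, k+4 ≠ k) i))
    (hu.1 _)

/-- A_i is anticomplete to B_{i+1} (C6) -/
lemma L_AB1 (h6 : IsEmpty (cycleGraph 6 ↪g G)) {u b : V} {i : Fin 5}
    (hu : TA G w u i) (hb : TB G w b (i+1)) (hadj : G.Adj u b) : False := by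
  have e : i + 1 + 1 = i + 2 := addr i (by decide)
  have hbw : G.Adj b (w (i+2)) := by rw [← e]; exact hb.2.2.1
  exact noC6 h6 hadj hbw
    (wadj hw ((by decide : ∀ k : Fin 5, (cycleGraph 5).Adj (k+2) (k+3)) i))
    (wadj hw ((by decide : ∀ k : Fin 5, (cycleGraph 5).Adj (k+3) (k+4)) i))
    (wadj hw ((by decide : ∀ k : Fin 5, (cycleGraph 5).Adj (k+4) k) i))
    hu.2.1.symm
    (hu.2.2 (i+2) ((by decide : ∀ k : Fin 5, k+2 ≠ k) i))
    (hu.2.2 (i+3) ((by decide : ∀ k : Fin 5, k+3 ≠ k) i))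
    (hu.2.2 (i+4) ((by decide : ∀ k : Fin 5, k+4 ≠ k) i))
    (hb.2.2.2 (i+3) ((by decide : ∀ k : Fin 5, k+3 ≠ k+1) i)
      ((by decide : ∀ k : Fin 5, k+3 ≠ k+1+1) i))
    (hb.2.2.2 (i+4) ((by decide : ∀ k : Fin 5, k+4 ≠ k+1) i)
      ((by decide : ∀ k : Fin 5, k+4 ≠ k+1+1) i))
    (hb.2.2.2 i ((by decide : ∀ k : Fin 5, k ≠ k+1) i)
      ((by decide : ∀ k : Fin 5, k ≠ k+1+1) i))
    (wnadj hw ((by decide : ∀ k : Fin 5, ¬ (cycleGraph 5).Adj (k+2) (k+4)) i))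
    (wnadj hw ((by decide : ∀ k : Fin 5, ¬ (cycleGraph 5).Adj (k+2) k) i))
    (wnadj hw ((by decide : ∀ k : Fin 5, ¬ (cycleGraph 5).Adj (k+3) k) i))
    (hu.1 _) (hu.1 _) (hu.1 _) (hb.1 _) (hb.1 _) (hb.1 _)
    (hwi _ _ ((by decide : ∀ k : Fin 5, k+2 ≠ k+4) i))
    (hwi _ _ ((by decide : ∀ k : Fin 5, k+2 ≠ k) i))
    (hwi _ _ ((by decide : ∀ k : Fin 5, k+3 ≠ k) i))

/-- A_i is anticomplete to B_{i+3} (C6) -/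
lemma L_AB3 (h6 : IsEmpty (cycleGraph 6 ↪g G)) {u b : V} {i : Fin 5}
    (hu : TA G w u i) (hb : TB G w b (i+3)) (hadj : G.Adj u b) : False := by
  exact noC6 h6 hadj hb.2.1
    (wadj hw ((by decide : ∀ k : Fin 5, (cycleGraph 5).Adj (k+3) (k+2)) i))
    (wadj hw ((by decide : ∀ k : Fin 5, (cycleGraph 5).Adj (k+2) (k+1)) i))
    (wadj hw ((by decide : ∀ k : Fin 5, (cycleGraph 5).Adj (k+1) k) i))
    hu.2.1.symm
    (hu.2.2 (i+3) ((by decide : ∀ k : Fin 5, k+3 ≠ k) i))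
    (hu.2.2 (i+2) ((by decide : ∀ k : Fin 5, k+2 ≠ k) i))
    (hu.2.2 (i+1) ((by decide : ∀ k : Fin 5, k+1 ≠ k) i))
    (hb.2.2.2 (i+2) ((by decide : ∀ k : Fin 5, k+2 ≠ k+3) i)
      ((by decide : ∀ k : Fin 5, k+2 ≠ k+3+1) i))
    (hb.2.2.2 (i+1) ((by decide : ∀ k : Fin 5, k+1 ≠ k+3) i)
      ((by decide : ∀ k : Fin 5, k+1 ≠ k+3+1) i))
    (hb.2.2.2 i ((by decide : ∀ k : Fin 5, k ≠ k+3) i)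
      ((by decide : ∀ k : Fin 5, k ≠ k+3+1) i))
    (wnadj hw ((by decide : ∀ k : Fin 5, ¬ (cycleGraph 5).Adj (k+3) (k+1)) i))
    (wnadj hw ((by decide : ∀ k : Fin 5, ¬ (cycleGraph 5).Adj (k+3) k) i))
    (wnadj hw ((by decide : ∀ k : Fin 5, ¬ (cycleGraph 5).Adj (k+2) k) i))
    (hu.1 _) (hu.1 _) (hu.1 _) (hb.1 _) (hb.1 _) (hb.1 _)
    (hwi _ _ ((by decide : ∀ k : Fin 5, k+3 ≠ k+1) i))
    (hwi _ _ ((by decide : ∀ k : Fin 5, k+3 ≠ k) i))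
    (hwi _ _ ((by decide : ∀ k : Fin 5, k+2 ≠ k) i))

/-- A_i can only see B_{i+2} among the B classes -/
lemma L_AB (h6 : IsEmpty (cycleGraph 6 ↪g G)) (hdia : IsEmpty (diamondGraph ↪g G))
    {u b : V} {i j : Fin 5}
    (hu : TA G w u i) (hb : TB G w b j) (hadj : G.Adj u b) : j = i + 2 := by
  rcases c5cover i j with rfl | rfl | rfl | rfl | rfl
  · exact absurd hadj (fun h => L_AB0 hw hwi hdia hu hb h)
  · exact absurd hadj (fun h => L_AB1 hw hwi h6 hu hb h)
  · rfl
  · exact absurd hadj (fun h => L_AB3 hw hwi h6 hu hb h)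
  · exact absurd hadj (fun h => L_AB4 hw hwi hdia hu hb h)

/-- B_i is anticomplete to B_{i+1} (diamond) -/
lemma L_BB1 (hdia : IsEmpty (diamondGraph ↪g G)) {b b' : V} {i : Fin 5}
    (hb : TB G w b i) (hb' : TB G w b' (i+1)) (hadj : G.Adj b b') : False :=
  noDiamond hdia hb.2.2.1.symm
    (wadj hw ((by decide : ∀ k : Fin 5, (cycleGraph 5).Adj (k+1) k) i))
    hb'.2.1.symm hb.2.1 hadj
    (fun h => hb'.2.2.2 i ((by decide : ∀ k : Fin 5, k ≠ k+1) i)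
      ((by decide : ∀ k : Fin 5, k ≠ k+1+1) i) h.symm)
    (fun e => hb'.1 i e.symm)

/-- B_i is anticomplete to B_{i+2} (C4) -/
lemma L_BB2 (h4 : IsEmpty (cycleGraph 4 ↪g G)) {b b' : V} {i : Fin 5}
    (hb : TB G w b i) (hb' : TB G w b' (i+2)) (hadj : G.Adj b b') : False :=
  noC4 h4 hb.2.2.1
    (wadj hw ((by decide : ∀ k : Fin 5, (cycleGraph 5).Adj (k+1) (k+2)) i))
    hb'.2.1.symm hadj.symm
    (hb.2.2.2 (i+2) ((by decide : ∀ k : Fin 5, k+2 ≠ k) i)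
      ((by decide : ∀ k : Fin 5, k+2 ≠ k+1) i))
    (fun h => hb'.2.2.2 (i+1) ((by decide : ∀ k : Fin 5, k+1 ≠ k+2) i)
      ((by decide : ∀ k : Fin 5, k+1 ≠ k+2+1) i) h.symm)
    (hb.1 _) (fun e => hb'.1 (i+1) e.symm)

/-- different B classes are anticomplete -/
lemma L_BB (h4 : IsEmpty (cycleGraph 4 ↪g G)) (hdia : IsEmpty (diamondGraph ↪g G))
    {b b' : V} {i j : Fin 5}
    (hb : TB G w b i) (hb' : TB G w b' j) (hij : j ≠ i) (hadj : G.Adj b b') : False := by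
  rcases c5cover i j with h | rfl | rfl | rfl | rfl
  · exact hij h
  · exact L_BB1 hw hwi hdia hb hb' hadj
  · exact L_BB2 hw hwi h4 hb hb' hadj
  · exact L_BB2 hw hwi h4 hb' (by
      have e : i + 3 + 2 = i := addr0 i (by decide)
      rw [← e] at hb; exact hb) hadj.symm
  · exact L_BB1 hw hwi hdia hb' (by
      have e : i + 4 + 1 = i := addr0 i (by decide)
      rw [← e] at hb; exact hb) hadj.symm

/-- B_i is a clique -/
lemma L_Bclique (hdia : IsEmpty (diamondGraph ↪g G)) {b b' : V} {i : Fin 5}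
    (hb : TB G w b i) (hb' : TB G w b' i) (hne : b ≠ b') : G.Adj b b' := by
  by_contra hn
  exact noDiamond hdia
    (wadj hw ((by decide : ∀ k : Fin 5, (cycleGraph 5).Adj k (k+1)) i))
    hb.2.1.symm hb'.2.1.symm hb.2.2.1.symm hb'.2.2.1.symm hn hne

end Struct

end StmtAux


namespace StmtAux

variable {V : Type*} {G : SimpleGraph V} {w : Fin 5 → V}

section Struct2

variable (hw : ∀ a b : Fin 5, G.Adj (w a) (w b) ↔ (cycleGraph 5).Adj a b)
variable (hwi : ∀ a b : Fin 5, a ≠ b → w a ≠ w b)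

include hw hwi

/-- P7: a D-vertex adjacent to a D-neighbour of a B-vertex sees that B-vertex -/
lemma L_DB (h7p : IsEmpty (pathGraph 7 ↪g G)) {x y b : V} {i : Fin 5}
    (hd : ∀ j, ¬ G.Adj x (w j)) (hd' : ∀ j, ¬ G.Adj y (w j))
    (hxy : G.Adj x y) (hb : TB G w b i) (hyb : G.Adj y b) (hnxb : ¬ G.Adj x b) : False :=
  noP7 h7p hxy hyb hb.2.2.1
    (wadj hw ((by decide : ∀ k : Fin 5, (cycleGraph 5).Adj (k+1) (k+2)) i))
    (wadj hw ((by decide : ∀ k : Fin 5, (cycleGraph 5).Adj (k+2) (k+3)) i))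
    (wadj hw ((by decide : ∀ k : Fin 5, (cycleGraph 5).Adj (k+3) (k+4)) i))
    hnxb (hd _) (hd _) (hd _) (hd _)
    (hd' _) (hd' _) (hd' _) (hd' _)
    (hb.2.2.2 (i+2) ((by decide : ∀ k : Fin 5, k+2 ≠ k) i)
      ((by decide : ∀ k : Fin 5, k+2 ≠ k+1) i))
    (hb.2.2.2 (i+3) ((by decide : ∀ k : Fin 5, k+3 ≠ k) i)
      ((by decide : ∀ k : Fin 5, k+3 ≠ k+1) i))
    (hb.2.2.2 (i+4) ((by decide : ∀ k : Fin 5, k+4 ≠ k) i)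
      ((by decide : ∀ k : Fin 5, k+4 ≠ k+1) i))
    (wnadj hw ((by decide : ∀ k : Fin 5, ¬ (cycleGraph 5).Adj (k+1) (k+3)) i))
    (wnadj hw ((by decide : ∀ k : Fin 5, ¬ (cycleGraph 5).Adj (k+1) (k+4)) i))
    (wnadj hw ((by decide : ∀ k : Fin 5, ¬ (cycleGraph 5).Adj (k+2) (k+4)) i))
    (fun e => hd i (by rw [e]; exact hb.2.1))
    (D_notC hw hd _) (D_notC hw hd _) (D_notC hw hd _) (D_notC hw hd _)
    (D_notC hw hd' _) (D_notC hw hd' _) (D_notC hw hd' _) (D_notC hw hd' _)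
    (hb.1 _) (hb.1 _) (hb.1 _)
    (hwi _ _ ((by decide : ∀ k : Fin 5, k+1 ≠ k+3) i))
    (hwi _ _ ((by decide : ∀ k : Fin 5, k+1 ≠ k+4) i))
    (hwi _ _ ((by decide : ∀ k : Fin 5, k+2 ≠ k+4) i))

/-- P7: a D-vertex adjacent to a D-neighbour of an A-vertex sees that A-vertex -/
lemma L_DA (h7p : IsEmpty (pathGraph 7 ↪g G)) {x y u : V} {i : Fin 5}
    (hd : ∀ j, ¬ G.Adj x (w j)) (hd' : ∀ j, ¬ G.Adj y (w j))
    (hxy : G.Adj x y) (hu : TA G w u i) (hyu : G.Adj y u) (hnxu : ¬ G.Adj x u) : False :=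
  noP7 h7p hxy hyu hu.2.1
    (wadj hw ((by decide : ∀ k : Fin 5, (cycleGraph 5).Adj k (k+1)) i))
    (wadj hw ((by decide : ∀ k : Fin 5, (cycleGraph 5).Adj (k+1) (k+2)) i))
    (wadj hw ((by decide : ∀ k : Fin 5, (cycleGraph 5).Adj (k+2) (k+3)) i))
    hnxu (hd _) (hd _) (hd _) (hd _)
    (hd' _) (hd' _) (hd' _) (hd' _)
    (hu.2.2 (i+1) ((by decide : ∀ k : Fin 5, k+1 ≠ k) i))
    (hu.2.2 (i+2) ((by decide : ∀ k : Fin 5, k+2 ≠ k) i))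
    (hu.2.2 (i+3) ((by decide : ∀ k : Fin 5, k+3 ≠ k) i))
    (wnadj hw ((by decide : ∀ k : Fin 5, ¬ (cycleGraph 5).Adj k (k+2)) i))
    (wnadj hw ((by decide : ∀ k : Fin 5, ¬ (cycleGraph 5).Adj k (k+3)) i))
    (wnadj hw ((by decide : ∀ k : Fin 5, ¬ (cycleGraph 5).Adj (k+1) (k+3)) i))
    (fun e => hd i (by rw [e]; exact hu.2.1))
    (D_notC hw hd _) (D_notC hw hd _) (D_notC hw hd _) (D_notC hw hd _)
    (D_notC hw hd' _) (D_notC hw hd' _) (D_notC hw hd' _) (D_notC hw hd' _)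
    (hu.1 _) (hu.1 _) (hu.1 _)
    (hwi _ _ ((by decide : ∀ k : Fin 5, k ≠ k+2) i))
    (hwi _ _ ((by decide : ∀ k : Fin 5, k ≠ k+3) i))
    (hwi _ _ ((by decide : ∀ k : Fin 5, k+1 ≠ k+3) i))

lemma L_DBB0 (hdia : IsEmpty (diamondGraph ↪g G)) {x b b' : V} {i : Fin 5}
    (hd : ∀ j, ¬ G.Adj x (w j)) (hb : TB G w b i) (hb' : TB G w b' i) (hne : b ≠ b')
    (h1 : G.Adj x b) (h2 : G.Adj x b') : False :=
  noDiamond hdia (L_Bclique hw hwi hdia hb hb' hne) h1.symm hb.2.1 h2.symm hb'.2.1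
    (hd i) (D_notC hw hd i)

lemma L_DBB1 (h4 : IsEmpty (cycleGraph 4 ↪g G)) (hdia : IsEmpty (diamondGraph ↪g G))
    {x b b' : V} {i : Fin 5}
    (hd : ∀ j, ¬ G.Adj x (w j)) (hb : TB G w b i) (hb' : TB G w b' (i+1))
    (h1 : G.Adj x b) (h2 : G.Adj x b') : False :=
  noC4 h4 h1 hb.2.2.1 hb'.2.1.symm h2.symm (hd _)
    (fun h => L_BB1 hw hwi hdia hb hb' h)
    (D_notC hw hd _)
    (fun e => hb.2.2.2 (i+1+1) ((by decide : ∀ k : Fin 5, k+1+1 ≠ k) i)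
      ((by decide : ∀ k : Fin 5, k+1+1 ≠ k+1) i) (by rw [e]; exact hb'.2.2.1))

lemma L_DBB2 (h4 : IsEmpty (cycleGraph 4 ↪g G)) (h6 : IsEmpty (cycleGraph 6 ↪g G))
    {x b b' : V} {i : Fin 5}
    (hd : ∀ j, ¬ G.Adj x (w j)) (hb : TB G w b i) (hb' : TB G w b' (i+2))
    (h1 : G.Adj x b) (h2 : G.Adj x b') : False := by
  have e23 : i + 2 + 1 = i + 3 := addr i (by decide)
  have hb3 : G.Adj (w (i+3)) b' := by rw [← e23]; exact hb'.2.2.1.symm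
  exact noC6 h6 h1 hb.2.1
    (wadj hw ((by decide : ∀ k : Fin 5, (cycleGraph 5).Adj k (k+4)) i))
    (wadj hw ((by decide : ∀ k : Fin 5, (cycleGraph 5).Adj (k+4) (k+3)) i))
    hb3 h2.symm
    (hd _) (hd _) (hd _)
    (hb.2.2.2 (i+4) ((by decide : ∀ k : Fin 5, k+4 ≠ k) i)
      ((by decide : ∀ k : Fin 5, k+4 ≠ k+1) i))
    (hb.2.2.2 (i+3) ((by decide : ∀ k : Fin 5, k+3 ≠ k) i)
      ((by decide : ∀ k : Fin 5, k+3 ≠ k+1) i))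
    (fun h => L_BB2 hw hwi h4 hb hb' h)
    (wnadj hw ((by decide : ∀ k : Fin 5, ¬ (cycleGraph 5).Adj k (k+3)) i))
    (fun h => hb'.2.2.2 i ((by decide : ∀ k : Fin 5, k ≠ k+2) i)
      ((by decide : ∀ k : Fin 5, k ≠ k+2+1) i) h.symm)
    (fun h => hb'.2.2.2 (i+4) ((by decide : ∀ k : Fin 5, k+4 ≠ k+2) i)
      ((by decide : ∀ k : Fin 5, k+4 ≠ k+2+1) i) h.symm)
    (D_notC hw hd _) (D_notC hw hd _) (D_notC hw hd _)
    (hb.1 _) (hb.1 _)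
    (fun e => hb.2.2.2 (i+2) ((by decide : ∀ k : Fin 5, k+2 ≠ k) i)
      ((by decide : ∀ k : Fin 5, k+2 ≠ k+1) i) (by rw [e]; exact hb'.2.1))
    (hwi _ _ ((by decide : ∀ k : Fin 5, k ≠ k+3) i))
    (fun e => hb'.1 i e.symm)
    (fun e => hb'.1 (i+4) e.symm)

/-- a D-vertex sees at most one B-vertex -/
lemma L_DBBeq (h4 : IsEmpty (cycleGraph 4 ↪g G)) (h6 : IsEmpty (cycleGraph 6 ↪g G))
    (hdia : IsEmpty (diamondGraph ↪g G)) {x b b' : V} {i j : Fin 5}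
    (hd : ∀ j, ¬ G.Adj x (w j)) (hb : TB G w b i) (hb' : TB G w b' j)
    (h1 : G.Adj x b) (h2 : G.Adj x b') : b = b' := by
  by_contra hne
  rcases c5cover i j with h | rfl | rfl | rfl | rfl
  · rw [h] at hb'; exact L_DBB0 hw hwi hdia hd hb hb' hne h1 h2
  · exact L_DBB1 hw hwi h4 hdia hd hb hb' h1 h2
  · exact L_DBB2 hw hwi h4 h6 hd hb hb' h1 h2
  · exact L_DBB2 hw hwi h4 h6 hd hb' (by
      have e : i + 3 + 2 = i := addr0 i (by decide)
      rw [← e] at hb; exact hb) h2 h1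
  · exact L_DBB1 hw hwi h4 hdia hd hb' (by
      have e : i + 4 + 1 = i := addr0 i (by decide)
      rw [← e] at hb; exact hb) h2 h1

lemma L_DAA0 (h4 : IsEmpty (cycleGraph 4 ↪g G)) (hdia : IsEmpty (diamondGraph ↪g G))
    {x u u' : V} {i : Fin 5}
    (hd : ∀ j, ¬ G.Adj x (w j)) (hu : TA G w u i) (hu' : TA G w u' i) (hne : u ≠ u')
    (h1 : G.Adj x u) (h2 : G.Adj x u') : False := by
  by_cases huu : G.Adj u u'
  · exact noDiamond hdia huu h1.symm hu.2.1 h2.symm hu'.2.1 (hd i) (D_notC hw hd i)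
  · exact noC4 h4 h1 hu.2.1 hu'.2.1.symm h2.symm (hd i) huu (D_notC hw hd i) hne

lemma L_DAA1 (h4 : IsEmpty (cycleGraph 4 ↪g G)) (h7p : IsEmpty (pathGraph 7 ↪g G))
    {x u u' : V} {i : Fin 5}
    (hd : ∀ j, ¬ G.Adj x (w j)) (hu : TA G w u i) (hu' : TA G w u' (i+1))
    (h1 : G.Adj x u) (h2 : G.Adj x u') : False :=
  noP7 h7p h1.symm h2 hu'.2.1
    (wadj hw ((by decide : ∀ k : Fin 5, (cycleGraph 5).Adj (k+1) (k+2)) i))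
    (wadj hw ((by decide : ∀ k : Fin 5, (cycleGraph 5).Adj (k+2) (k+3)) i))
    (wadj hw ((by decide : ∀ k : Fin 5, (cycleGraph 5).Adj (k+3) (k+4)) i))
    (fun h => L_AA1 hw hwi h4 hu hu' h)
    (hu.2.2 (i+1) ((by decide : ∀ k : Fin 5, k+1 ≠ k) i))
    (hu.2.2 (i+2) ((by decide : ∀ k : Fin 5, k+2 ≠ k) i))
    (hu.2.2 (i+3) ((by decide : ∀ k : Fin 5, k+3 ≠ k) i))
    (hu.2.2 (i+4) ((by decide : ∀ k : Fin 5, k+4 ≠ k) i))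
    (hd _) (hd _) (hd _) (hd _)
    (hu'.2.2 (i+2) ((by decide : ∀ k : Fin 5, k+2 ≠ k+1) i))
    (hu'.2.2 (i+3) ((by decide : ∀ k : Fin 5, k+3 ≠ k+1) i))
    (hu'.2.2 (i+4) ((by decide : ∀ k : Fin 5, k+4 ≠ k+1) i))
    (wnadj hw ((by decide : ∀ k : Fin 5, ¬ (cycleGraph 5).Adj (k+1) (k+3)) i))
    (wnadj hw ((by decide : ∀ k : Fin 5, ¬ (cycleGraph 5).Adj (k+1) (k+4)) i))
    (wnadj hw ((by decide : ∀ k : Fin 5, ¬ (cycleGraph 5).Adj (k+2) (k+4)) i))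
    (fun e => hu.2.2 (i+1) ((by decide : ∀ k : Fin 5, k+1 ≠ k) i)
      (by rw [e]; exact hu'.2.1))
    (hu.1 _) (hu.1 _) (hu.1 _) (hu.1 _)
    (D_notC hw hd _) (D_notC hw hd _) (D_notC hw hd _) (D_notC hw hd _)
    (hu'.1 _) (hu'.1 _) (hu'.1 _)
    (hwi _ _ ((by decide : ∀ k : Fin 5, k+1 ≠ k+3) i))
    (hwi _ _ ((by decide : ∀ k : Fin 5, k+1 ≠ k+4) i))
    (hwi _ _ ((by decide : ∀ k : Fin 5, k+2 ≠ k+4) i))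

lemma L_DAA2 (h6 : IsEmpty (cycleGraph 6 ↪g G)) {x u u' : V} {i : Fin 5}
    (hd : ∀ j, ¬ G.Adj x (w j)) (hu : TA G w u i) (hu' : TA G w u' (i+2))
    (h1 : G.Adj x u) (h2 : G.Adj x u') : False :=
  noC6 h6 h1.symm h2 hu'.2.1
    (wadj hw ((by decide : ∀ k : Fin 5, (cycleGraph 5).Adj (k+2) (k+1)) i))
    (wadj hw ((by decide : ∀ k : Fin 5, (cycleGraph 5).Adj (k+1) k) i))
    hu.2.1.symm
    (fun h => L_AA2 hw hwi h6 hu hu' h)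
    (hu.2.2 (i+2) ((by decide : ∀ k : Fin 5, k+2 ≠ k) i))
    (hu.2.2 (i+1) ((by decide : ∀ k : Fin 5, k+1 ≠ k) i))
    (hd _) (hd _) (hd _)
    (hu'.2.2 (i+1) ((by decide : ∀ k : Fin 5, k+1 ≠ k+2) i))
    (hu'.2.2 i ((by decide : ∀ k : Fin 5, k ≠ k+2) i))
    (wnadj hw ((by decide : ∀ k : Fin 5, ¬ (cycleGraph 5).Adj (k+2) k) i))
    (fun e => hu.2.2 (i+2) ((by decide : ∀ k : Fin 5, k+2 ≠ k) i)
      (by rw [e]; exact hu'.2.1))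
    (hu.1 _) (hu.1 _)
    (D_notC hw hd _) (D_notC hw hd _) (D_notC hw hd _)
    (hu'.1 _) (hu'.1 _)
    (hwi _ _ ((by decide : ∀ k : Fin 5, k+2 ≠ k) i))

/-- a D-vertex sees at most one A-vertex -/
lemma L_DAAeq (h4 : IsEmpty (cycleGraph 4 ↪g G)) (h6 : IsEmpty (cycleGraph 6 ↪g G))
    (h7p : IsEmpty (pathGraph 7 ↪g G)) (hdia : IsEmpty (diamondGraph ↪g G))
    {x u u' : V} {i j : Fin 5}
    (hd : ∀ j, ¬ G.Adj x (w j)) (hu : TA G w u i) (hu' : TA G w u' j)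
    (h1 : G.Adj x u) (h2 : G.Adj x u') : u = u' := by
  by_contra hne
  rcases c5cover i j with h | rfl | rfl | rfl | rfl
  · rw [h] at hu'; exact L_DAA0 hw hwi h4 hdia hd hu hu' hne h1 h2
  · exact L_DAA1 hw hwi h4 h7p hd hu hu' h1 h2
  · exact L_DAA2 hw hwi h6 hd hu hu' h1 h2
  · exact L_DAA2 hw hwi h6 hd hu' (by
      have e : i + 3 + 2 = i := addr0 i (by decide)
      rw [← e] at hu; exact hu) h2 h1
  · exact L_DAA1 hw hwi h4 h7p hd hu' (by
      have e : i + 4 + 1 = i := addr0 i (by decide)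
      rw [← e] at hu; exact hu) h2 h1

end Struct2

end StmtAux


namespace StmtAux

variable {V : Type*} {G : SimpleGraph V} {w : Fin 5 → V}

section Struct3

variable (hw : ∀ a b : Fin 5, G.Adj (w a) (w b) ↔ (cycleGraph 5).Adj a b)
variable (hwi : ∀ a b : Fin 5, a ≠ b → w a ≠ w b)

include hw hwi

/-- if a D-vertex sees an A-vertex and a B-vertex, then they form a triangle and
the B class is the opposite one -/
lemma L_DAB (h4 : IsEmpty (cycleGraph 4 ↪g G)) (h6 : IsEmpty (cycleGraph 6 ↪g G))
    (h7c : IsEmpty (cycleGraph 7 ↪g G)) (hdia : IsEmpty (diamondGraph ↪g G))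
    {x u b : V} {i j : Fin 5}
    (hd : ∀ j, ¬ G.Adj x (w j)) (hu : TA G w u i) (hb : TB G w b j)
    (h1 : G.Adj x u) (h2 : G.Adj x b) : j = i + 2 ∧ G.Adj u b := by
  rcases c5cover i j with h | rfl | rfl | rfl | rfl
  · exfalso; rw [h] at hb
    exact noC4 h4 h1 hu.2.1 hb.2.1.symm h2.symm (hd i)
      (fun hh => L_AB0 hw hwi hdia hu hb hh)
      (D_notC hw hd i)
      (fun e => hu.2.2 (i+1) ((by decide : ∀ k : Fin 5, k+1 ≠ k) i)
        (by rw [e]; exact hb.2.2.1))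
  · exfalso
    have e12 : i + 1 + 1 = i + 2 := addr i (by decide)
    have hb2 : G.Adj (w (i+2)) b := by rw [← e12]; exact hb.2.2.1.symm
    exact noC7 h7c h1 hu.2.1
      (wadj hw ((by decide : ∀ k : Fin 5, (cycleGraph 5).Adj k (k+4)) i))
      (wadj hw ((by decide : ∀ k : Fin 5, (cycleGraph 5).Adj (k+4) (k+3)) i))
      (wadj hw ((by decide : ∀ k : Fin 5, (cycleGraph 5).Adj (k+3) (k+2)) i))
      hb2 h2.symm
      (hd _) (hd _) (hd _) (hd _)
      (hu.2.2 (i+4) ((by decide : ∀ k : Fin 5, k+4 ≠ k) i))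
      (hu.2.2 (i+3) ((by decide : ∀ k : Fin 5, k+3 ≠ k) i))
      (hu.2.2 (i+2) ((by decide : ∀ k : Fin 5, k+2 ≠ k) i))
      (fun h => L_AB1 hw hwi h6 hu hb h)
      (wnadj hw ((by decide : ∀ k : Fin 5, ¬ (cycleGraph 5).Adj k (k+3)) i))
      (wnadj hw ((by decide : ∀ k : Fin 5, ¬ (cycleGraph 5).Adj k (k+2)) i))
      (fun h => hb.2.2.2 i ((by decide : ∀ k : Fin 5, k ≠ k+1) i)
        ((by decide : ∀ k : Fin 5, k ≠ k+1+1) i) h.symm)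
      (wnadj hw ((by decide : ∀ k : Fin 5, ¬ (cycleGraph 5).Adj (k+4) (k+2)) i))
      (fun h => hb.2.2.2 (i+4) ((by decide : ∀ k : Fin 5, k+4 ≠ k+1) i)
        ((by decide : ∀ k : Fin 5, k+4 ≠ k+1+1) i) h.symm)
      (fun h => hb.2.2.2 (i+3) ((by decide : ∀ k : Fin 5, k+3 ≠ k+1) i)
        ((by decide : ∀ k : Fin 5, k+3 ≠ k+1+1) i) h.symm)
      (D_notC hw hd _) (D_notC hw hd _) (D_notC hw hd _) (D_notC hw hd _)
      (hu.1 _) (hu.1 _) (hu.1 _)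
      (fun e => hu.2.2 (i+1) ((by decide : ∀ k : Fin 5, k+1 ≠ k) i)
        (by rw [e]; exact hb.2.1))
      (hwi _ _ ((by decide : ∀ k : Fin 5, k ≠ k+3) i))
      (hwi _ _ ((by decide : ∀ k : Fin 5, k ≠ k+2) i))
      (fun e => hb.1 i e.symm)
      (hwi _ _ ((by decide : ∀ k : Fin 5, k+4 ≠ k+2) i))
      (fun e => hb.1 (i+4) e.symm)
      (fun e => hb.1 (i+3) e.symm)
  · refine ⟨rfl, ?_⟩
    by_contra hub
    exact noC6 h6 h1 hu.2.1
      (wadj hw ((by decide : ∀ k : Fin 5, (cycleGraph 5).Adj k (k+1)) i))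
      (wadj hw ((by decide : ∀ k : Fin 5, (cycleGraph 5).Adj (k+1) (k+2)) i))
      hb.2.1.symm h2.symm
      (hd _) (hd _) (hd _)
      (hu.2.2 (i+1) ((by decide : ∀ k : Fin 5, k+1 ≠ k) i))
      (hu.2.2 (i+2) ((by decide : ∀ k : Fin 5, k+2 ≠ k) i))
      hub
      (wnadj hw ((by decide : ∀ k : Fin 5, ¬ (cycleGraph 5).Adj k (k+2)) i))
      (fun h => hb.2.2.2 i ((by decide : ∀ k : Fin 5, k ≠ k+2) i)
        ((by decide : ∀ k : Fin 5, k ≠ k+2+1) i) h.symm)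
      (fun h => hb.2.2.2 (i+1) ((by decide : ∀ k : Fin 5, k+1 ≠ k+2) i)
        ((by decide : ∀ k : Fin 5, k+1 ≠ k+2+1) i) h.symm)
      (D_notC hw hd _) (D_notC hw hd _) (D_notC hw hd _)
      (hu.1 _) (hu.1 _)
      (fun e => hu.2.2 (i+2) ((by decide : ∀ k : Fin 5, k+2 ≠ k) i)
        (by rw [e]; exact hb.2.1))
      (hwi _ _ ((by decide : ∀ k : Fin 5, k ≠ k+2) i))
      (fun e => hb.1 i e.symm)
      (fun e => hb.1 (i+1) e.symm)
  · exfalso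
    exact noC7 h7c h1 hu.2.1
      (wadj hw ((by decide : ∀ k : Fin 5, (cycleGraph 5).Adj k (k+1)) i))
      (wadj hw ((by decide : ∀ k : Fin 5, (cycleGraph 5).Adj (k+1) (k+2)) i))
      (wadj hw ((by decide : ∀ k : Fin 5, (cycleGraph 5).Adj (k+2) (k+3)) i))
      hb.2.1.symm h2.symm
      (hd _) (hd _) (hd _) (hd _)
      (hu.2.2 (i+1) ((by decide : ∀ k : Fin 5, k+1 ≠ k) i))
      (hu.2.2 (i+2) ((by decide : ∀ k : Fin 5, k+2 ≠ k) i))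
      (hu.2.2 (i+3) ((by decide : ∀ k : Fin 5, k+3 ≠ k) i))
      (fun h => L_AB3 hw hwi h6 hu hb h)
      (wnadj hw ((by decide : ∀ k : Fin 5, ¬ (cycleGraph 5).Adj k (k+2)) i))
      (wnadj hw ((by decide : ∀ k : Fin 5, ¬ (cycleGraph 5).Adj k (k+3)) i))
      (fun h => hb.2.2.2 i ((by decide : ∀ k : Fin 5, k ≠ k+3) i)
        ((by decide : ∀ k : Fin 5, k ≠ k+3+1) i) h.symm)
      (wnadj hw ((by decide : ∀ k : Fin 5, ¬ (cycleGraph 5).Adj (k+1) (k+3)) i))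
      (fun h => hb.2.2.2 (i+1) ((by decide : ∀ k : Fin 5, k+1 ≠ k+3) i)
        ((by decide : ∀ k : Fin 5, k+1 ≠ k+3+1) i) h.symm)
      (fun h => hb.2.2.2 (i+2) ((by decide : ∀ k : Fin 5, k+2 ≠ k+3) i)
        ((by decide : ∀ k : Fin 5, k+2 ≠ k+3+1) i) h.symm)
      (D_notC hw hd _) (D_notC hw hd _) (D_notC hw hd _) (D_notC hw hd _)
      (hu.1 _) (hu.1 _) (hu.1 _)
      (fun e => hu.2.2 (i+3) ((by decide : ∀ k : Fin 5, k+3 ≠ k) i)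
        (by rw [e]; exact hb.2.1))
      (hwi _ _ ((by decide : ∀ k : Fin 5, k ≠ k+2) i))
      (hwi _ _ ((by decide : ∀ k : Fin 5, k ≠ k+3) i))
      (fun e => hb.1 i e.symm)
      (hwi _ _ ((by decide : ∀ k : Fin 5, k+1 ≠ k+3) i))
      (fun e => hb.1 (i+1) e.symm)
      (fun e => hb.1 (i+2) e.symm)
  · exfalso
    have e40 : i + 4 + 1 = i := addr0 i (by decide)
    have hbw : G.Adj (w i) b := by rw [← e40]; exact hb.2.2.1.symm
    exact noC4 h4 h1 hu.2.1 hbw h2.symm (hd i)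
      (fun hh => L_AB4 hw hwi hdia hu hb hh)
      (D_notC hw hd i)
      (fun e => hu.2.2 (i+4) ((by decide : ∀ k : Fin 5, k+4 ≠ k) i)
        (by rw [e]; exact hb.2.1))

/-- two nonadjacent A_i vertices have no common A_i neighbour -/
lemma L_AcommonA (hdia : IsEmpty (diamondGraph ↪g G)) {u u' x : V} {i : Fin 5}
    (hu : TA G w u i) (hu' : TA G w u' i) (hx : TA G w x i)
    (hn : ¬ G.Adj u u') (hne : u ≠ u') (h1 : G.Adj x u) (h2 : G.Adj x u') : False :=
  noDiamond hdia hx.2.1 h1 h2 hu.2.1.symm hu'.2.1.symm hn hne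

/-- no B vertex sees two adjacent A_i vertices -/
lemma L_BcommonAadj (hdia : IsEmpty (diamondGraph ↪g G)) {u u' b : V} {i : Fin 5}
    (hu : TA G w u i) (hu' : TA G w u' i) (huu : G.Adj u u')
    (hb : TB G w b (i+2)) (h1 : G.Adj b u) (h2 : G.Adj b u') : False :=
  noDiamond hdia huu h1.symm hu.2.1 h2.symm hu'.2.1
    (hb.2.2.2 i ((by decide : ∀ k : Fin 5, k ≠ k+2) i)
      ((by decide : ∀ k : Fin 5, k ≠ k+2+1) i))
    (hb.1 i)

/-- an A_i vertex sees at most one vertex of B_{i+2} -/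
lemma L_AtwoB (hdia : IsEmpty (diamondGraph ↪g G)) {u b b' : V} {i : Fin 5}
    (hu : TA G w u i) (hb : TB G w b (i+2)) (hb' : TB G w b' (i+2))
    (h1 : G.Adj u b) (h2 : G.Adj u b') : b = b' := by
  by_contra hne
  exact noDiamond hdia (L_Bclique hw hwi hdia hb hb' hne) h1.symm hb.2.1 h2.symm hb'.2.1
    (hu.2.2 (i+2) ((by decide : ∀ k : Fin 5, k+2 ≠ k) i))
    (hu.1 _)

end Struct3

end StmtAux


namespace StmtAux

variable {V : Type*} {G : SimpleGraph V}

lemma closed_reach {S : Set V} (hS : ∀ x ∈ S, ∀ y, G.Adj x y → y ∈ S) :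
    ∀ {a b : V}, G.Reachable a b → a ∈ S → b ∈ S := by
  intro a b hr ha
  obtain ⟨p⟩ := hr
  induction p with
  | nil => exact ha
  | cons h q ih => exact ih (hS _ ha _ h)

lemma simplicial_bound [Fintype V] {z : V}
    (h : G.IsClique (insert z (G.neighborSet z))) :
    (G.neighborSet z).ncard ≤ G.cliqueNum := by
  classical
  have hzn : z ∉ G.neighborSet z := by simp
  have hfin : (insert z (G.neighborSet z)).Finite := Set.toFinite _
  have hcl : G.IsClique (hfin.toFinset : Finset V) := by rwa [Set.Finite.coe_toFinset]
  have hcard : hfin.toFinset.card ≤ G.cliqueNum := hcl.card_le_cliqueNum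
  have h1 : (insert z (G.neighborSet z)).ncard = hfin.toFinset.card :=
    Set.ncard_eq_toFinset_card _ hfin
  have h2 : (insert z (G.neighborSet z)).ncard = (G.neighborSet z).ncard + 1 :=
    Set.ncard_insert_of_notMem hzn (Set.toFinite _)
  omega

lemma degtwo_bound [Fintype V] {z x y : V}
    (h : ∀ t, G.Adj z t → t = x ∨ t = y) {p q : V} (hpq : G.Adj p q) :
    (G.neighborSet z).ncard ≤ G.cliqueNum := by
  classical
  have h1 : G.neighborSet z ⊆ {x, y} := by
    intro t ht
    rcases h t ((G.mem_neighborSet z t).mp ht) with rfl | rfl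
    · exact Set.mem_insert _ _
    · exact Set.mem_insert_iff.mpr (Or.inr rfl)
  have h2 : (G.neighborSet z).ncard ≤ 2 := by
    refine le_trans (Set.ncard_le_ncard h1 (Set.toFinite _)) ?_
    refine le_trans (Set.ncard_insert_le x {y}) ?_
    simp
  have hcl : G.IsClique (({p, q} : Finset V) : Set V) := by
    rw [Finset.coe_insert, Finset.coe_singleton]
    exact isClique_pair.mpr (fun _ => hpq)
  have hcard : ({p, q} : Finset V).card ≤ G.cliqueNum := hcl.card_le_cliqueNum
  rw [Finset.card_pair hpq.ne] at hcard
  omega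

end StmtAux


namespace StmtAux

variable {V : Type*} {G : SimpleGraph V} {w : Fin 5 → V}

section Endgame

variable (hw : ∀ a b : Fin 5, G.Adj (w a) (w b) ↔ (cycleGraph 5).Adj a b)
variable (hwi : ∀ a b : Fin 5, a ≠ b → w a ≠ w b)

include hw hwi

lemma Abranch (h4 : IsEmpty (cycleGraph 4 ↪g G)) (h6 : IsEmpty (cycleGraph 6 ↪g G))
    (hdia : IsEmpty (diamondGraph ↪g G))
    (hD : ∀ x : V, ¬ (∀ j, ¬ G.Adj x (w j)))
    (hns : ∀ z : V, ¬ G.IsClique (insert z (G.neighborSet z)))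
    {u : V} (hu : TA G w u 0) :
    ∃ z x y : V, ∀ t, G.Adj z t → t = x ∨ t = y := by
  classical
  set X : V → Prop := fun x => TA G w x 0 ∧ (x = u ∨ G.Adj u x) with hX
  have hXu : X u := ⟨hu, Or.inl rfl⟩
  -- X is a clique
  have hXcl : ∀ x y, X x → X y → x ≠ y → G.Adj x y := by
    intro x y hx hy hne
    rcases hx.2 with rfl | hux
    · rcases hy.2 with rfl | huy
      · exact absurd rfl hne
      · exact huy
    · rcases hy.2 with rfl | huy
      · exact hux.symm
      · by_contra hn
        rcases eq_or_ne x u with rfl | hxu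
        · exact hn huy
        rcases eq_or_ne y u with rfl | hyu
        · exact hn hux.symm
        exact L_AcommonA hw hwi hdia hx.1 hy.1 hu hn hne hux huy
  -- every member of X has a B_2 neighbour
  have hXB : ∀ x, X x → ∃ b, TB G w b 2 ∧ G.Adj x b := by
    intro x hx
    by_contra hnb
    push_neg at hnb
    -- then x is simplicial
    apply hns x
    -- every neighbour of x is w 0 or in X
    have hnbr : ∀ a, G.Adj x a → a = w 0 ∨ X a := by
      intro a hxa
      by_cases haw : ∃ j, a = w j
      · obtain ⟨j, rfl⟩ := haw
        rcases eq_or_ne j 0 with rfl | hj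
        · exact Or.inl rfl
        · exact absurd hxa (hx.1.2.2 j hj)
      · push_neg at haw
        rcases classify hw hwi h4 hdia a haw with hDa | ⟨j, hTAa⟩ | ⟨j, hTBa⟩
        · exact absurd hDa (hD a)
        · rcases eq_or_ne j 0 with rfl | hj
          · right
            refine ⟨hTAa, ?_⟩
            rcases hx.2 with rfl | hux
            · exact Or.inr hxa
            rcases eq_or_ne a u with rfl | hau
            · exact Or.inl rfl
            · refine Or.inr (by_contra fun hn => ?_)
              exact L_AcommonA hw hwi hdia hu hTAa hx.1 hn (fun e => hau e.symm) hux.symm hxa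
          · exact absurd hxa (L_AA hw hwi h4 h6 hx.1 hTAa hj)
        · have hj2 : j = 2 := by
            have := L_AB hw hwi h6 hdia hx.1 hTBa hxa
            rw [this]; decide
          rw [hj2] at hTBa
          exact absurd hxa (hnb a hTBa)
    -- now prove the clique property
    intro p hp q hq hne
    rcases Set.mem_insert_iff.mp hp with rfl | hp'
    · rcases Set.mem_insert_iff.mp hq with rfl | hq'
      · exact absurd rfl hne
      · exact (G.mem_neighborSet _ _).mp hq'
    rcases Set.mem_insert_iff.mp hq with rfl | hq'
    · exact ((G.mem_neighborSet _ _).mp hp').symm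
    have hpa := (G.mem_neighborSet _ _).mp hp'
    have hqa := (G.mem_neighborSet _ _).mp hq'
    rcases hnbr p hpa with rfl | hpX
    · rcases hnbr q hqa with rfl | hqX
      · exact absurd rfl hne
      · exact hqX.1.2.1.symm
    · rcases hnbr q hqa with rfl | hqX
      · exact hpX.1.2.1
      · exact hXcl p q hpX hqX hne
  -- X = {u}
  have hXeq : ∀ x, X x → x = u := by
    intro x hx
    by_contra hne
    have hux : G.Adj u x := by
      rcases hx.2 with rfl | h
      · exact absurd rfl hne
      · exact h
    obtain ⟨b, hb, hxb⟩ := hXB x hx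
    obtain ⟨b', hb', hub'⟩ := hXB u hXu
    have e02 : (0 : Fin 5) + 2 = 2 := by decide
    have hb2 : TB G w b ((0:Fin 5)+2) := by rw [e02]; exact hb
    have hb'2 : TB G w b' ((0:Fin 5)+2) := by rw [e02]; exact hb'
    rcases eq_or_ne b b' with rfl | hbb
    · exact L_BcommonAadj hw hwi hdia hu hx.1 hux hb2 hub'.symm hxb.symm
    · have hbb' : G.Adj b b' := L_Bclique hw hwi hdia hb hb' hbb
      refine noC4 h4 hub' hbb'.symm hxb.symm hux.symm ?_ ?_ ?_ ?_
      · intro hn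
        exact L_BcommonAadj hw hwi hdia hu hx.1 hux hb2 hn.symm hxb.symm
      · intro hn
        exact L_BcommonAadj hw hwi hdia hu hx.1 hux hb'2 hub'.symm hn
      · intro e
        exact hu.2.2 2 (by decide) (by rw [e]; exact hb.2.1)
      · intro e
        exact hx.1.2.2 2 (by decide) (by rw [← e]; exact hb'.2.1)
  -- u has a unique B-neighbour
  obtain ⟨b, hb, hub⟩ := hXB u hXu
  refine ⟨u, w 0, b, ?_⟩
  intro t ht
  by_cases htw : ∃ j, t = w j
  · obtain ⟨j, rfl⟩ := htw
    rcases eq_or_ne j 0 with rfl | hj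
    · exact Or.inl rfl
    · exact absurd ht (hu.2.2 j hj)
  · push_neg at htw
    rcases classify hw hwi h4 hdia t htw with hDt | ⟨j, hTAt⟩ | ⟨j, hTBt⟩
    · exact absurd hDt (hD t)
    · rcases eq_or_ne j 0 with rfl | hj
      · have := hXeq t ⟨hTAt, Or.inr ht⟩
        rw [this] at ht
        exact absurd ht G.irrefl
      · exact absurd ht (L_AA hw hwi h4 h6 hu hTAt hj)
    · have hj2 : j = 2 := by
        have := L_AB hw hwi h6 hdia hu hTBt ht
        rw [this]; decide
      rw [hj2] at hTBt
      have e02 : (0 : Fin 5) + 2 = 2 := by decide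
      have hb2 : TB G w b ((0:Fin 5)+2) := by rw [e02]; exact hb
      have ht2 : TB G w t ((0:Fin 5)+2) := by rw [e02]; exact hTBt
      exact Or.inr (L_AtwoB hw hwi hdia hu hb2 ht2 hub ht).symm

end Endgame

end StmtAux


namespace StmtAux

variable {V : Type*} {G : SimpleGraph V} {w : Fin 5 → V}

section Main

variable (hw : ∀ a b : Fin 5, G.Adj (w a) (w b) ↔ (cycleGraph 5).Adj a b)
variable (hwi : ∀ a b : Fin 5, a ≠ b → w a ≠ w b)

include hw hwi

theorem structure_main (hconn : G.Connected)
    (h4 : IsEmpty (cycleGraph 4 ↪g G)) (h6 : IsEmpty (cycleGraph 6 ↪g G))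
    (h7c : IsEmpty (cycleGraph 7 ↪g G)) (h7p : IsEmpty (pathGraph 7 ↪g G))
    (hdia : IsEmpty (diamondGraph ↪g G)) :
    (∃ z : V, G.IsClique (insert z (G.neighborSet z))) ∨
      (∃ z x y : V, ∀ t, G.Adj z t → t = x ∨ t = y) := by
  classical
  by_cases hsimp : ∃ z : V, G.IsClique (insert z (G.neighborSet z))
  · exact Or.inl hsimp
  push_neg at hsimp
  have hns : ∀ z : V, ¬ G.IsClique (insert z (G.neighborSet z)) := hsimp
  -- step 1 : no vertex avoids the whole cycle neighbourhood-wise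
  have hD : ∀ x : V, ¬ (∀ j, ¬ G.Adj x (w j)) := by
    intro x hx
    by_cases hq : ∃ q, G.Adj x q ∧ ∃ j, G.Adj q (w j)
    · obtain ⟨q, hxq, j, hqj⟩ := hq
      have hqC : ∀ j', q ≠ w j' := fun j' e => hx j' (e ▸ hxq)
      -- classify neighbours of x, establish x is simplicial, contradiction
      apply hns x
      -- helper: any neighbour a of x is adjacent to any TA/TB vertex it must be
      have key : ∀ a, G.Adj x a → a ≠ x →
          ((∀ j', ¬ G.Adj a (w j')) ∨ (∃ i, TA G w a i) ∨ (∃ i, TB G w a i)) := by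
        intro a hxa _
        have haC : ∀ j', a ≠ w j' := fun j' e => hx j' (e ▸ hxa)
        exact classify hw hwi h4 hdia a haC
      intro p hp q' hq' hne
      rcases Set.mem_insert_iff.mp hp with rfl | hp'
      · rcases Set.mem_insert_iff.mp hq' with rfl | hq''
        · exact absurd rfl hne
        · exact (G.mem_neighborSet _ _).mp hq''
      rcases Set.mem_insert_iff.mp hq' with rfl | hq''
      · exact ((G.mem_neighborSet _ _).mp hp').symm
      have hpa := (G.mem_neighborSet _ _).mp hp'
      have hqa := (G.mem_neighborSet _ _).mp hq''
      have hpC : ∀ j', p ≠ w j' := fun j' e => hx j' (e ▸ hpa)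
      have hqC2 : ∀ j', q' ≠ w j' := fun j' e => hx j' (e ▸ hqa)
      rcases classify hw hwi h4 hdia p hpC with hDp | ⟨i, hTAp⟩ | ⟨i, hTBp⟩
      · -- p is a D-vertex
        rcases classify hw hwi h4 hdia q' hqC2 with hDq | ⟨i', hTAq⟩ | ⟨i', hTBq⟩
        · -- both D : use q (the witness with a cycle neighbour)
          rcases classify hw hwi h4 hdia q hqC with hDqq | ⟨i'', hTAqq⟩ | ⟨i'', hTBqq⟩
          · exact absurd hqj (hDqq j)
          · have hpq : G.Adj p q := by
              by_contra hn
              exact L_DA hw hwi h7p hDp hx hpa.symm hTAqq hxq hn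
            have hq'q : G.Adj q' q := by
              by_contra hn
              exact L_DA hw hwi h7p hDq hx hqa.symm hTAqq hxq hn
            by_contra hn
            exact noDiamond hdia hxq hpa hqa hpq.symm hq'q.symm hn hne
          · have hpq : G.Adj p q := by
              by_contra hn
              exact L_DB hw hwi h7p hDp hx hpa.symm hTBqq hxq hn
            have hq'q : G.Adj q' q := by
              by_contra hn
              exact L_DB hw hwi h7p hDq hx hqa.symm hTBqq hxq hn
            by_contra hn
            exact noDiamond hdia hxq hpa hqa hpq.symm hq'q.symm hn hne
        · by_contra hn
          exact L_DA hw hwi h7p hDp hx hpa.symm hTAq hqa hn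
        · by_contra hn
          exact L_DB hw hwi h7p hDp hx hpa.symm hTBq hqa hn
      · rcases classify hw hwi h4 hdia q' hqC2 with hDq | ⟨i', hTAq⟩ | ⟨i', hTBq⟩
        · by_contra hn
          exact L_DA hw hwi h7p hDq hx hqa.symm hTAp hpa (fun h => hn h.symm)
        · exact absurd (L_DAAeq hw hwi h4 h6 h7p hdia hx hTAp hTAq hpa hqa) hne
        · exact (L_DAB hw hwi h4 h6 h7c hdia hx hTAp hTBq hpa hqa).2
      · rcases classify hw hwi h4 hdia q' hqC2 with hDq | ⟨i', hTAq⟩ | ⟨i', hTBq⟩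
        · by_contra hn
          exact L_DB hw hwi h7p hDq hx hqa.symm hTBp hpa (fun h => hn h.symm)
        · exact ((L_DAB hw hwi h4 h6 h7c hdia hx hTAq hTBp hqa hpa).2).symm
        · exact absurd (L_DBBeq hw hwi h4 h6 hdia hx hTBp hTBq hpa hqa) hne
    · -- x is in a "deep" component : contradicts connectivity
      push_neg at hq
      set S : Set V := {s | (∀ j, ¬ G.Adj s (w j)) ∧ ∀ q, G.Adj s q → (∀ j, ¬ G.Adj q (w j))}
        with hS
      have hxS : x ∈ S := ⟨hx, fun q hq' j hqj => hq q hq' j hqj⟩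
      have hclosed : ∀ s ∈ S, ∀ y, G.Adj s y → y ∈ S := by
        intro s hs y hsy
        have hyD : ∀ j, ¬ G.Adj y (w j) := hs.2 y hsy
        refine ⟨hyD, ?_⟩
        intro q hyq j hqj
        have hqC : ∀ j', q ≠ w j' := fun j' e => hyD j' (e ▸ hyq)
        have hnsq : ¬ G.Adj s q := fun h => (hs.2 q h) j hqj
        rcases classify hw hwi h4 hdia q hqC with hDq | ⟨i, hTAq⟩ | ⟨i, hTBq⟩
        · exact hDq j hqj
        · exact L_DA hw hwi h7p hs.1 hyD hsy hTAq hyq hnsq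
        · exact L_DB hw hwi h7p hs.1 hyD hsy hTBq hyq hnsq
      have hw0 : w 0 ∈ S :=
        closed_reach hclosed (hconn.preconnected x (w 0)) hxS
      exact hw0.1 1 (wadj hw (by decide : (cycleGraph 5).Adj 0 1))
  -- step 2 : A-vertices
  by_cases hA : ∃ (u : V) (i : Fin 5), TA G w u i
  · obtain ⟨u, i, hu⟩ := hA
    right
    have hw' := hw_rot hw i
    have hwi' := hwi_rot hwi i
    have hu' : TA G (fun k => w (i + k)) u 0 := by
      have := TA_rot i hu
      rwa [sub_self] at this
    have hD' : ∀ x : V, ¬ (∀ a, ¬ G.Adj x ((fun k => w (i + k)) a)) := by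
      intro x hx
      apply hD x
      intro j
      have := hx (j - i)
      simpa [show i + (j - i) = j by abel] using this
    exact Abranch hw' hwi' h4 h6 hdia hD' hns hu'
  -- step 3 : B-vertices
  by_cases hB : ∃ (b : V) (i : Fin 5), TB G w b i
  · obtain ⟨b, i, hb⟩ := hB
    exfalso
    apply hns b
    push_neg at hA
    -- every neighbour of b is w i, w (i+1), or a TB _ i vertex
    have hnbr : ∀ a, G.Adj b a → a = w i ∨ a = w (i+1) ∨ TB G w a i := by
      intro a hba
      by_cases haw : ∃ j, a = w j
      · obtain ⟨j, rfl⟩ := haw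
        rcases eq_or_ne j i with rfl | hji
        · exact Or.inl rfl
        rcases eq_or_ne j (i+1) with rfl | hji1
        · exact Or.inr (Or.inl rfl)
        · exact absurd hba (hb.2.2.2 j hji hji1)
      · push_neg at haw
        rcases classify hw hwi h4 hdia a haw with hDa | ⟨j, hTAa⟩ | ⟨j, hTBa⟩
        · exact absurd hDa (hD a)
        · exact absurd hTAa (hA a j)
        · rcases eq_or_ne j i with rfl | hji
          · exact Or.inr (Or.inr hTBa)
          · exact absurd hba (fun h => L_BB hw hwi h4 hdia hb hTBa hji h)
    intro p hp q hq hne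
    rcases Set.mem_insert_iff.mp hp with rfl | hp'
    · rcases Set.mem_insert_iff.mp hq with rfl | hq'
      · exact absurd rfl hne
      · exact (G.mem_neighborSet _ _).mp hq'
    rcases Set.mem_insert_iff.mp hq with rfl | hq'
    · exact ((G.mem_neighborSet _ _).mp hp').symm
    have hpa := (G.mem_neighborSet _ _).mp hp'
    have hqa := (G.mem_neighborSet _ _).mp hq'
    have hadj01 : G.Adj (w i) (w (i+1)) :=
      wadj hw ((by decide : ∀ k : Fin 5, (cycleGraph 5).Adj k (k+1)) i)
    rcases hnbr p hpa with rfl | rfl | hTBp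
    · rcases hnbr q hqa with rfl | rfl | hTBq
      · exact absurd rfl hne
      · exact hadj01
      · exact hTBq.2.1.symm
    · rcases hnbr q hqa with rfl | rfl | hTBq
      · exact hadj01.symm
      · exact absurd rfl hne
      · exact hTBq.2.2.1.symm
    · rcases hnbr q hqa with rfl | rfl | hTBq
      · exact hTBp.2.1
      · exact hTBp.2.2.1
      · exact L_Bclique hw hwi hdia hTBp hTBq hne
  -- step 4 : the graph is just the 5-cycle
  · push_neg at hA hB
    have hall : ∀ x : V, ∃ j, x = w j := by
      intro x
      by_contra hxw
      push_neg at hxw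
      rcases classify hw hwi h4 hdia x hxw with hDx | ⟨i, hTAx⟩ | ⟨i, hTBx⟩
      · exact hD x hDx
      · exact hA x i hTAx
      · exact hB x i hTBx
    right
    refine ⟨w 0, w 1, w 4, ?_⟩
    intro t ht
    obtain ⟨j, rfl⟩ := hall t
    have hc : (cycleGraph 5).Adj 0 j := (hw 0 j).mp ht
    rcases (by decide : ∀ j : Fin 5, (cycleGraph 5).Adj 0 j → j = 1 ∨ j = 4) j hc with
      rfl | rfl
    · exact Or.inl rfl
    · exact Or.inr rfl

end Main

end StmtAux

theorem stmt_16 {V : Type*} [Fintype V] (G : SimpleGraph V) (hconn : G.Connected)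
    (hP7 : IndFree G (pathGraph 7)) (hC7 : IndFree G (cycleGraph 7))
    (hC4 : IndFree G (cycleGraph 4)) (hdiamond : IndFree G diamondGraph) (hC6 : IndFree G (cycleGraph 6))
    (hC5 : Nonempty (cycleGraph 5 ↪g G)) :
    HasCliqueCutset G ∨ ∃ v : V, (G.neighborSet v).ncard ≤ G.cliqueNum := by
  classical
  obtain ⟨e⟩ := hC5
  have hw : ∀ a b : Fin 5, G.Adj (e a) (e b) ↔ (cycleGraph 5).Adj a b :=
    fun a b => e.map_adj_iff
  have hwi : ∀ a b : Fin 5, a ≠ b → (e a) ≠ (e b) :=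
    fun a b h h' => h (e.injective h')
  have h4 : IsEmpty (cycleGraph 4 ↪g G) := hC4
  have h6 : IsEmpty (cycleGraph 6 ↪g G) := hC6
  have h7c : IsEmpty (cycleGraph 7 ↪g G) := hC7
  have h7p : IsEmpty (pathGraph 7 ↪g G) := hP7
  have hdia : IsEmpty (diamondGraph ↪g G) := hdiamond
  rcases StmtAux.structure_main hw hwi hconn h4 h6 h7c h7p hdia with
    ⟨z, hz⟩ | ⟨z, x, y, hz⟩
  · exact Or.inr ⟨z, StmtAux.simplicial_bound hz⟩
  · exact Or.inr ⟨z, StmtAux.degtwo_bound hz ((hw 0 1).mpr (by decide))⟩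
end
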